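/- arXiv:2112.12283 — 13 statements merged into one kernel-verified Lean document; each statement's English description precedes it below -/
import Mathlib

section
/- Let d be a positive integer, let μ_d be the product measure on ℝ^d of d copies of the standard Gaussian measure N(0,1), let C = (c_{ij}) be a d×d real matrix all of whose entries are nonnegative, and let n_1, …, n_d be nonnegative integers. Then ∫ ∏_{i=1}^d (∑_{j=1}^d c_{ij} z_j)^{2 n_i} dμ_d(z) ≥ ∏_{i=1}^d ∫ (∑_{j=1}^d c_{ij} z_j)^{2 n_i} dμ_d(z). (This is the Gaussian product inequality for any centered Gaussian random vector X = (X_1, …, X_d) satisfying Condition (III), since the even powers X_i^{2 n_i} are unchanged by multiplying components of X by ±1.) -/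
open MeasureTheory ProbabilityTheory Real Filter Finset

namespace GPIAux

/-- The `k`-th moment of the standard Gaussian. -/
noncomputable def gm (k : ℕ) : ℝ := ∫ x, x ^ k ∂(gaussianReal 0 1)

lemma integrable_pow_mul_gauss (k : ℕ) :
    Integrable (fun x : ℝ => x ^ k * rexp (-(2⁻¹ : ℝ) * x ^ 2)) := by
  have hc : Continuous fun x : ℝ => x ^ k * rexp (-(2⁻¹ : ℝ) * x ^ 2) := by fun_prop
  refine hc.locallyIntegrable.integrable_of_isBigO_cocompact
    (g := fun x : ℝ => rexp (-(4⁻¹ : ℝ) * x ^ 2)) ?_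
    ⟨Set.univ, Filter.univ_mem,
      (integrable_exp_neg_mul_sq (by norm_num : (0:ℝ) < 4⁻¹)).integrableOn⟩
  rw [Asymptotics.isBigO_iff]
  refine ⟨1, ?_⟩
  have ht := tendsto_rpow_abs_mul_exp_neg_mul_sq_cocompact
    (by norm_num : (0:ℝ) < 4⁻¹) (k : ℝ)
  filter_upwards [ht.eventually (gt_mem_nhds one_pos)] with x hx
  have habs : |x| ^ (k : ℝ) = |x| ^ k := Real.rpow_natCast _ _
  have hsplit : rexp (-(2⁻¹ : ℝ) * x ^ 2)
      = rexp (-(4⁻¹ : ℝ) * x ^ 2) * rexp (-(4⁻¹ : ℝ) * x ^ 2) := by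
    rw [← Real.exp_add]; ring_nf
  have hexp_pos : (0:ℝ) < rexp (-(4⁻¹ : ℝ) * x ^ 2) := Real.exp_pos _
  rw [habs] at hx
  have : ‖x ^ k * rexp (-(2⁻¹ : ℝ) * x ^ 2)‖
      = (|x| ^ k * rexp (-(4⁻¹ : ℝ) * x ^ 2)) * rexp (-(4⁻¹ : ℝ) * x ^ 2) := by
    rw [norm_mul, norm_pow, Real.norm_eq_abs, Real.norm_eq_abs,
      abs_of_pos (Real.exp_pos _), hsplit, mul_assoc]
  rw [this, Real.norm_eq_abs, abs_of_pos hexp_pos, one_mul]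
  exact mul_le_of_le_one_left hexp_pos.le hx.le

lemma integrable_pow_gauss (k : ℕ) :
    Integrable (fun x : ℝ => x ^ k) (gaussianReal 0 1) := by
  rw [gaussianReal_of_var_ne_zero 0 one_ne_zero,
    integrable_withDensity_iff (measurable_gaussianPDF 0 1)
      (ae_of_all _ fun x => ENNReal.ofReal_lt_top)]
  have heq : (fun x : ℝ => x ^ k * (gaussianPDF 0 1 x).toReal)
      = fun x : ℝ => (√(2 * π))⁻¹ * (x ^ k * rexp (-(2⁻¹ : ℝ) * x ^ 2)) := by
    funext x
    rw [gaussianPDF, ENNReal.toReal_ofReal (gaussianPDFReal_nonneg 0 1 x),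
      gaussianPDFReal]
    push_cast
    rw [mul_one]
    have : -(x - 0) ^ 2 / (2 * (1:ℝ)) = -(2⁻¹ : ℝ) * x ^ 2 := by ring
    rw [this]
    ring
  rw [heq]
  exact (integrable_pow_mul_gauss k).const_mul _

lemma gauss_map_neg :
    (gaussianReal 0 1).map (fun x : ℝ => -x) = gaussianReal 0 1 := by
  have h2 : (fun x : ℝ => -x) = fun x : ℝ => (-1 : ℝ) * x := by
    funext x; ring
  rw [h2, gaussianReal_map_const_mul (-1 : ℝ)]
  norm_num

lemma gm_odd {k : ℕ} (hk : Odd k) : gm k = 0 := by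
  have h : gm k = ∫ x, (-x) ^ k ∂(gaussianReal 0 1) := by
    rw [gm]
    nth_rewrite 1 [← gauss_map_neg]
    rw [integral_map (by fun_prop) (by fun_prop)]
  simp only [hk.neg_pow] at h
  rw [integral_neg] at h
  have : gm k = - gm k := h
  linarith

lemma gm_nonneg (k : ℕ) : 0 ≤ gm k := by
  rcases Nat.even_or_odd k with he | ho
  · exact integral_nonneg fun x => he.pow_nonneg x
  · rw [gm_odd ho]

lemma gm_zero : gm 0 = 1 := by
  simp [gm]

lemma gm_mul_le (a b : ℕ) : gm a * gm b ≤ gm (a + b) := by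
  rcases Nat.even_or_odd a with ha | ha
  swap
  · rw [gm_odd ha, zero_mul]; exact gm_nonneg _
  rcases Nat.even_or_odd b with hb | hb
  swap
  · rw [gm_odd hb, mul_zero]; exact gm_nonneg _
  obtain ⟨a', rfl⟩ := ha
  obtain ⟨b', rfl⟩ := hb
  have hsq : ∀ (x y : ℝ) (m : ℕ), x ^ 2 ≤ y ^ 2 → x ^ (m + m) ≤ y ^ (m + m) := by
    intro x y m h
    have h2 : (x ^ 2) ^ m ≤ (y ^ 2) ^ m := pow_le_pow_left₀ (sq_nonneg x) h m
    simpa [← pow_mul, two_mul] using h2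
  have key : 0 ≤ ∫ p : ℝ × ℝ,
      (p.1 ^ (a' + a') - p.2 ^ (a' + a')) * (p.1 ^ (b' + b') - p.2 ^ (b' + b'))
      ∂((gaussianReal 0 1).prod (gaussianReal 0 1)) := by
    refine integral_nonneg fun p => ?_
    show (0:ℝ) ≤ (p.1 ^ (a' + a') - p.2 ^ (a' + a')) * (p.1 ^ (b' + b') - p.2 ^ (b' + b'))
    rcases le_total (p.1 ^ 2) (p.2 ^ 2) with h | h
    · exact mul_nonneg_of_nonpos_of_nonpos
        (sub_nonpos.2 (hsq p.1 p.2 a' h)) (sub_nonpos.2 (hsq p.1 p.2 b' h))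
    · exact mul_nonneg (sub_nonneg.2 (hsq p.2 p.1 a' h)) (sub_nonneg.2 (hsq p.2 p.1 b' h))
  have hint : ∀ s t : ℕ, Integrable (fun p : ℝ × ℝ => p.1 ^ s * p.2 ^ t)
      ((gaussianReal 0 1).prod (gaussianReal 0 1)) :=
    fun s t => (integrable_pow_gauss s).mul_prod (integrable_pow_gauss t)
  have hexp : (fun p : ℝ × ℝ =>
        (p.1 ^ (a' + a') - p.2 ^ (a' + a')) * (p.1 ^ (b' + b') - p.2 ^ (b' + b')))
      = fun p : ℝ × ℝ =>
        (p.1 ^ ((a' + a') + (b' + b')) * p.2 ^ 0 + p.1 ^ 0 * p.2 ^ ((a' + a') + (b' + b')))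
        - (p.1 ^ (a' + a') * p.2 ^ (b' + b') + p.1 ^ (b' + b') * p.2 ^ (a' + a')) := by
    funext p
    rw [pow_add p.1 (a' + a') (b' + b'), pow_add p.2 (a' + a') (b' + b')]
    ring
  have hI1 : Integrable (fun p : ℝ × ℝ =>
      p.1 ^ ((a' + a') + (b' + b')) * p.2 ^ 0 + p.1 ^ 0 * p.2 ^ ((a' + a') + (b' + b')))
      ((gaussianReal 0 1).prod (gaussianReal 0 1)) := (hint _ _).add (hint _ _)
  have hI2 : Integrable (fun p : ℝ × ℝ =>
      p.1 ^ (a' + a') * p.2 ^ (b' + b') + p.1 ^ (b' + b') * p.2 ^ (a' + a'))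
      ((gaussianReal 0 1).prod (gaussianReal 0 1)) := (hint _ _).add (hint _ _)
  have eP : ∀ s t : ℕ, (∫ p : ℝ × ℝ, p.1 ^ s * p.2 ^ t
      ∂((gaussianReal 0 1).prod (gaussianReal 0 1))) = gm s * gm t :=
    fun s t => integral_prod_mul (fun x : ℝ => x ^ s) (fun y : ℝ => y ^ t)
  rw [hexp, integral_sub hI1 hI2, integral_add (hint _ _) (hint _ _),
    integral_add (hint _ _) (hint _ _), eP, eP, eP, eP, gm_zero] at key
  nlinarith [key]

lemma gm_prod_le {ι : Type*} (s : Finset ι) (k : ι → ℕ) :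
    ∏ i ∈ s, gm (k i) ≤ gm (∑ i ∈ s, k i) := by
  induction s using Finset.cons_induction with
  | empty => simp [gm_zero]
  | cons a s ha ih =>
    rw [Finset.prod_cons, Finset.sum_cons]
    calc gm (k a) * ∏ i ∈ s, gm (k i) ≤ gm (k a) * gm (∑ i ∈ s, k i) :=
          mul_le_mul_of_nonneg_left ih (gm_nonneg _)
      _ ≤ gm (k a + ∑ i ∈ s, k i) := gm_mul_le _ _

lemma integral_pi_eq_prod {d : ℕ} (f : Fin d → ℝ → ℝ) :
    ∫ z : Fin d → ℝ, ∏ j, f j (z j) ∂(Measure.pi fun _ : Fin d => gaussianReal 0 1)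
      = ∏ j, ∫ x, f j x ∂(gaussianReal 0 1) := by
  letI : MeasureSpace ℝ := ⟨gaussianReal 0 1⟩
  haveI : SigmaFinite (volume : Measure ℝ) :=
    inferInstanceAs (SigmaFinite (gaussianReal 0 1))
  exact MeasureTheory.integral_fintype_prod_eq_prod f

lemma integrable_pi_prod {d : ℕ} (f : Fin d → ℝ → ℝ)
    (hf : ∀ j, Integrable (f j) (gaussianReal 0 1)) :
    Integrable (fun z : Fin d → ℝ => ∏ j, f j (z j))
      (Measure.pi fun _ : Fin d => gaussianReal 0 1) := by
  letI : MeasureSpace ℝ := ⟨gaussianReal 0 1⟩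
  haveI : SigmaFinite (volume : Measure ℝ) :=
    inferInstanceAs (SigmaFinite (gaussianReal 0 1))
  exact MeasureTheory.Integrable.fintype_prod hf

lemma integrable_pi_monomial {d : ℕ} (m : Fin d → ℕ) :
    Integrable (fun z : Fin d → ℝ => ∏ j, (z j) ^ (m j))
      (Measure.pi fun _ : Fin d => gaussianReal 0 1) :=
  integrable_pi_prod _ fun j => integrable_pow_gauss (m j)

lemma integral_pi_monomial {d : ℕ} (m : Fin d → ℕ) :
    ∫ z : Fin d → ℝ, ∏ j, (z j) ^ (m j) ∂(Measure.pi fun _ : Fin d => gaussianReal 0 1)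
      = ∏ j, gm (m j) :=
  integral_pi_eq_prod fun j x => x ^ (m j)

lemma expand_one {d : ℕ} (c : Fin d → ℝ) (N : ℕ) :
    ∫ z : Fin d → ℝ, (∑ j, c j * z j) ^ N ∂(Measure.pi fun _ : Fin d => gaussianReal 0 1)
      = ∑ k ∈ Finset.piAntidiag Finset.univ N,
          ((Nat.multinomial Finset.univ k : ℝ) * ∏ j, c j ^ k j) * ∏ j, gm (k j) := by
  have h1 : ∀ z : Fin d → ℝ, (∑ j, c j * z j) ^ N
      = ∑ k ∈ Finset.piAntidiag Finset.univ N,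
          ((Nat.multinomial Finset.univ k : ℝ) * ∏ j, c j ^ k j) * ∏ j, (z j) ^ (k j) := by
    intro z
    rw [Finset.sum_pow_eq_sum_piAntidiag]
    refine Finset.sum_congr rfl fun k _ => ?_
    simp_rw [mul_pow, Finset.prod_mul_distrib]
    ring
  simp_rw [h1]
  rw [integral_finset_sum _ fun k _ => (integrable_pi_monomial k).const_mul _]
  exact Finset.sum_congr rfl fun k _ => by
    rw [integral_const_mul, integral_pi_monomial]

end GPIAux

open GPIAux

/-- The Gaussian product inequality under Condition (III): if each component of a
centered Gaussian vector is a nonnegative linear combination of independent standard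
Gaussians, the expectation of the product of even powers dominates the product of
expectations. -/
theorem gaussian_product_inequality_condIII
    (d : ℕ) (hd : 0 < d) (C : Matrix (Fin d) (Fin d) ℝ)
    (hC : ∀ i j, 0 ≤ C i j) (n : Fin d → ℕ) :
    (∫ z : Fin d → ℝ, ∏ i, (∑ j, C i j * z j) ^ (2 * n i)
        ∂(Measure.pi fun _ : Fin d => gaussianReal 0 1))
      ≥ ∏ i, ∫ z : Fin d → ℝ, (∑ j, C i j * z j) ^ (2 * n i)
        ∂(Measure.pi fun _ : Fin d => gaussianReal 0 1) := by
  classical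
  set A : Fin d → Finset (Fin d → ℕ) :=
    fun i => Finset.piAntidiag Finset.univ (2 * n i) with hA
  -- coefficient of a tuple of multi-indices
  set coef : (Fin d → (Fin d → ℕ)) → ℝ :=
    fun K => ∏ i, ((Nat.multinomial Finset.univ (K i) : ℝ) * ∏ j, C i j ^ K i j)
    with hcoef
  have coef_nonneg : ∀ K, 0 ≤ coef K := by
    intro K
    refine Finset.prod_nonneg fun i _ => mul_nonneg (Nat.cast_nonneg _)
      (Finset.prod_nonneg fun j _ => pow_nonneg (hC i j) _)
  -- RHS expansion
  have hRHS : (∏ i, ∫ z : Fin d → ℝ, (∑ j, C i j * z j) ^ (2 * n i)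
        ∂(Measure.pi fun _ : Fin d => gaussianReal 0 1))
      = ∑ K ∈ Fintype.piFinset A, coef K * ∏ j, ∏ i, gm (K i j) := by
    have : ∀ i : Fin d, (∫ z : Fin d → ℝ, (∑ j, C i j * z j) ^ (2 * n i)
        ∂(Measure.pi fun _ : Fin d => gaussianReal 0 1))
        = ∑ k ∈ A i, ((Nat.multinomial Finset.univ k : ℝ) * ∏ j, C i j ^ k j)
            * ∏ j, gm (k j) := fun i => expand_one (fun j => C i j) (2 * n i)
    rw [Finset.prod_congr rfl fun i _ => this i, Finset.prod_univ_sum]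
    refine Finset.sum_congr rfl fun K _ => ?_
    rw [hcoef, Finset.prod_mul_distrib]
    congr 1
    exact Finset.prod_comm
  -- LHS expansion
  have hpt : ∀ z : Fin d → ℝ, (∏ i, (∑ j, C i j * z j) ^ (2 * n i))
      = ∑ K ∈ Fintype.piFinset A, coef K * ∏ j, (z j) ^ (∑ i, K i j) := by
    intro z
    have h1 : ∀ i : Fin d, (∑ j, C i j * z j) ^ (2 * n i)
        = ∑ k ∈ A i, ((Nat.multinomial Finset.univ k : ℝ) * ∏ j, C i j ^ k j)
            * ∏ j, (z j) ^ (k j) := by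
      intro i
      rw [hA, Finset.sum_pow_eq_sum_piAntidiag]
      refine Finset.sum_congr rfl fun k _ => ?_
      simp_rw [mul_pow, Finset.prod_mul_distrib]
      ring
    rw [Finset.prod_congr rfl fun i _ => h1 i, Finset.prod_univ_sum]
    refine Finset.sum_congr rfl fun K _ => ?_
    rw [hcoef, Finset.prod_mul_distrib]
    congr 1
    rw [Finset.prod_comm]
    exact Finset.prod_congr rfl fun j _ => (Finset.prod_pow_eq_pow_sum _ _ _)
  have hLHS : (∫ z : Fin d → ℝ, ∏ i, (∑ j, C i j * z j) ^ (2 * n i)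
        ∂(Measure.pi fun _ : Fin d => gaussianReal 0 1))
      = ∑ K ∈ Fintype.piFinset A, coef K * ∏ j, gm (∑ i, K i j) := by
    simp_rw [hpt]
    rw [integral_finset_sum _ fun K _ =>
      (integrable_pi_monomial fun j => ∑ i, K i j).const_mul _]
    exact Finset.sum_congr rfl fun K _ => by
      rw [integral_const_mul, integral_pi_monomial]
  rw [ge_iff_le, hRHS, hLHS]
  refine Finset.sum_le_sum fun K _ => ?_
  refine mul_le_mul_of_nonneg_left ?_ (coef_nonneg K)
  refine Finset.prod_le_prod (fun j _ => Finset.prod_nonneg fun i _ => gm_nonneg _)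
    fun j _ => gm_prod_le Finset.univ fun i => K i j
end

section
/- Let Σ be a d×d real symmetric positive definite matrix and let C be a d×d real lower-triangular matrix with strictly positive diagonal entries such that Σ = C Cᵀ (the Cholesky factor of Σ). If every off-diagonal entry of Σ⁻¹ is nonpositive, then every entry of C is nonnegative. -/
/-!
Put `L = C⁻¹`, again lower triangular with positive diagonal, so that `S⁻¹ = Lᵀ L`. For `j < i`,
`(Lᵀ L) i j = L i i * L i j + ∑_{k > i} L k i * L k j`, so descending induction on the row shows
that every off-diagonal entry of `L` is nonpositive. Then `L * C = 1` read row by row,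
`L i i * C i j = δ i j - ∑_{k < i} L i k * C k j`, gives `C ≥ 0` by ascending induction.
-/

open Matrix Finset

namespace Matrix

variable {n R : Type*} [Fintype n] [LinearOrder n]

theorem IsLowerTriangular.mul_apply_self [Semiring R] {A B : Matrix n n R}
    (hA : A.IsLowerTriangular) (hB : B.IsLowerTriangular) (i : n) :
    (A * B) i i = A i i * B i i :=
  Finset.sum_eq_single i
    (fun k _ hki => by
      rcases hki.lt_or_gt with h | h
      · exact mul_eq_zero_of_right _ (hB h)
      · exact mul_eq_zero_of_left (hA h) _)
    (fun h => absurd (mem_univ i) h)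

variable [CommRing R] [LinearOrder R] [IsStrictOrderedRing R]

theorem IsLowerTriangular.offDiag_nonpos_of_transpose_mul_self {L : Matrix n n R}
    (hL : L.IsLowerTriangular) (hdiag : ∀ i, 0 < L i i)
    (hLL : ∀ i j, i ≠ j → (Lᵀ * L) i j ≤ 0) :
    ∀ i j, i ≠ j → L i j ≤ 0 := by
  have below : ∀ i j, j < i → L i j ≤ 0 := by
    intro i
    induction i using WellFoundedGT.induction with
    | _ i ih =>
      intro j hji
      have htail : 0 ≤ ∑ k ∈ univ.erase i, L k i * L k j := by
        refine sum_nonneg fun k hk => ?_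
        rcases (ne_of_mem_erase hk).lt_or_gt with hki | hik
        · rw [hL hki, zero_mul]
        · exact mul_nonneg_of_nonpos_of_nonpos (ih k hik i hik) (ih k hik j (hji.trans hik))
      have hLij := hLL i j hji.ne'
      rw [mul_apply, ← add_sum_erase _ _ (mem_univ i)] at hLij
      simp only [transpose_apply] at hLij
      exact nonpos_of_mul_nonpos_right (by linarith) (hdiag i)
  intro i j hij
  rcases hij.lt_or_gt with h | h
  · exact (hL h).le
  · exact below i j h

theorem IsLowerTriangular.nonneg_of_mul_eq_one {L C : Matrix n n R}
    (hL : L.IsLowerTriangular) (hdiag : ∀ i, 0 < L i i) (hoff : ∀ i j, i ≠ j → L i j ≤ 0)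
    (hLC : L * C = 1) :
    ∀ i j, 0 ≤ C i j := by
  intro i
  induction i using WellFoundedLT.induction with
  | _ i ih =>
    intro j
    have htail : ∑ k ∈ univ.erase i, L i k * C k j ≤ 0 := by
      refine sum_nonpos fun k hk => ?_
      rcases (ne_of_mem_erase hk).lt_or_gt with hki | hik
      · exact mul_nonpos_of_nonpos_of_nonneg (hoff i k hki.ne') (ih k hki j)
      · rw [hL hik, zero_mul]
    have hrow : (L * C) i j = (1 : Matrix n n R) i j := by rw [hLC]
    have hδ : (0 : R) ≤ (1 : Matrix n n R) i j := by
      rw [one_apply]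
      split_ifs <;> norm_num
    rw [mul_apply, ← add_sum_erase _ _ (mem_univ i)] at hrow
    exact nonneg_of_mul_nonneg_right (by linarith) (hdiag i)

end Matrix

theorem cholesky_nonneg_of_inv_offdiag_nonpos_general
    (d : ℕ) (S C : Matrix (Fin d) (Fin d) ℝ)
    (hC_lower : ∀ i j : Fin d, i < j → C i j = 0)
    (hC_diag : ∀ i : Fin d, 0 < C i i)
    (hfact : S = C * Cᵀ)
    (hinv : ∀ i j : Fin d, i ≠ j → S⁻¹ i j ≤ 0) :
    ∀ i j : Fin d, 0 ≤ C i j := by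
  have hC : C.IsLowerTriangular := fun i j h => hC_lower i j h
  have hdet : IsUnit C.det := by
    rw [det_of_isLowerTriangular C hC]
    exact (prod_pos fun i _ => hC_diag i).ne'.isUnit
  have := C.invertibleOfIsUnitDet hdet
  have hL : C⁻¹.IsLowerTriangular := blockTriangular_inv_of_blockTriangular hC
  have hL_diag (i : Fin d) : 0 < C⁻¹ i i := by
    have h := hC.mul_apply_self hL i
    rw [mul_nonsing_inv C hdet, one_apply_eq] at h
    exact pos_of_mul_pos_right (h ▸ one_pos) (hC_diag i).le
  have hSinv : S⁻¹ = (C⁻¹)ᵀ * C⁻¹ := by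
    rw [hfact, Matrix.mul_inv_rev, transpose_nonsing_inv]
  refine hL.nonneg_of_mul_eq_one hL_diag ?_ (nonsing_inv_mul C hdet)
  exact hL.offDiag_nonpos_of_transpose_mul_self hL_diag (hSinv ▸ hinv)

/-- If a symmetric positive definite matrix `S` has Cholesky decomposition
`S = C * Cᵀ` (with `C` lower triangular with strictly positive diagonal) and all
off-diagonal entries of `S⁻¹` are nonpositive, then all entries of `C` are
nonnegative. -/
theorem cholesky_nonneg_of_inv_offdiag_nonpos
    (d : ℕ) (S C : Matrix (Fin d) (Fin d) ℝ)
    (hS : S.PosDef)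
    (hC_lower : ∀ i j : Fin d, i < j → C i j = 0)
    (hC_diag : ∀ i : Fin d, 0 < C i i)
    (hfact : S = C * Cᵀ)
    (hinv : ∀ i j : Fin d, i ≠ j → S⁻¹ i j ≤ 0) :
    ∀ i j : Fin d, 0 ≤ C i j :=
  cholesky_nonneg_of_inv_offdiag_nonpos_general d S C hC_lower hC_diag hfact hinv
end

section
/- Let Σ be a d×d real symmetric positive definite matrix such that every off-diagonal entry of Σ⁻¹ is nonpositive. Then Σ is completely positive: there exists a d×d real matrix C all of whose entries are nonnegative such that Σ = C Cᵀ. (In particular, Condition (II) implies Condition (III) for centered Gaussian random vectors.) -/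
open Matrix

lemma posDef_submatrix_equiv {m n : Type*} [Fintype m] [Fintype n] [DecidableEq m] [DecidableEq n]
    {M : Matrix n n ℝ} (hM : M.PosDef) (e : m ≃ n) : (M.submatrix e e).PosDef := by
  refine posDef_iff_dotProduct_mulVec.mpr ⟨hM.1.submatrix e, fun x hx => ?_⟩
  have hy : (x ∘ e.symm) ≠ 0 := by
    intro h; apply hx; funext i
    have := congrFun h (e i); simpa using this
  have := hM.dotProduct_mulVec_pos (x := x ∘ e.symm) hy
  simpa [submatrix_mulVec_equiv, dotProduct,
    ← e.sum_comp (fun j => x (e.symm j) * (M *ᵥ (x ∘ e.symm)) j)] using this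

lemma key_lemma : ∀ (d : ℕ) (A : Matrix (Fin d) (Fin d) ℝ), A.PosDef →
    (∀ i j, i ≠ j → A i j ≤ 0) → ∃ C : Matrix (Fin d) (Fin d) ℝ,
      (∀ i j, 0 ≤ C i j) ∧ A * (C * Cᵀ) = 1 := by
  intro d
  induction d with
  | zero =>
    intro A _ _
    exact ⟨1, fun i => i.elim0, by ext i; exact i.elim0⟩
  | succ d IH =>
    intro A hA hoff
    set e : Fin 1 ⊕ Fin d ≃ Fin (d + 1) := finSumFinEquiv.trans (finCongr (Nat.add_comm 1 d))
      with he
    set B : Matrix (Fin 1 ⊕ Fin d) (Fin 1 ⊕ Fin d) ℝ := A.submatrix e e with hBdef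
    have hBpd : B.PosDef := posDef_submatrix_equiv hA e
    have hBoff : ∀ i j, i ≠ j → B i j ≤ 0 := fun i j hij =>
      hoff (e i) (e j) (fun h => hij (e.injective h))
    have hBsym : ∀ i j, B j i = B i j := fun i j => by
      have := hBpd.1.apply i j; simpa using this
    set a : ℝ := B (Sum.inl 0) (Sum.inl 0) with ha_def
    have ha : 0 < a := by
      have := hBpd.dotProduct_mulVec_pos (x := Pi.single (Sum.inl 0) 1) (by
        intro h; have := congrFun h (Sum.inl 0); simp [Pi.single_apply] at this)
      simpa [dotProduct, mulVec, Pi.single_apply] using this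
    have ha' : a ≠ 0 := ne_of_gt ha
    set P : Matrix (Fin 1) (Fin d) ℝ := B.toBlocks₁₂ with hPdef
    set Q : Matrix (Fin d) (Fin d) ℝ := B.toBlocks₂₂ with hQdef
    have hP0 : ∀ j, P 0 j ≤ 0 := fun j => hBoff _ _ (by simp)
    have hA11 : B.toBlocks₁₁ = a • 1 := by
      ext i j
      fin_cases i; fin_cases j
      simp [toBlocks₁₁, ha_def]
    have hA21 : B.toBlocks₂₁ = Pᵀ := by
      ext i j
      simp [toBlocks₂₁, toBlocks₁₂, hPdef, hBsym]
    have hBblocks : B = fromBlocks (a • 1) P Pᵀ Q := by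
      rw [← hA11, ← hA21, hPdef, hQdef, fromBlocks_toBlocks]
    set M : Matrix (Fin d) (Fin d) ℝ := Q - a⁻¹ • (Pᵀ * P) with hMdef
    -- invertibility of the (1,1) block
    haveI hInv11 : Invertible (a • (1 : Matrix (Fin 1) (Fin 1) ℝ)) :=
      invertibleOfRightInverse _ (a⁻¹ • 1) (by
        rw [smul_mul_smul_comm, one_mul, mul_inv_cancel₀ ha', one_smul])
    have hInv11' : (a • (1 : Matrix (Fin 1) (Fin 1) ℝ))⁻¹ = a⁻¹ • 1 :=
      inv_eq_right_inv (by rw [smul_mul_smul_comm, one_mul, mul_inv_cancel₀ ha', one_smul])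
    -- M is the Schur complement
    have hSchur : M = Q - Pᴴ * (a • (1 : Matrix (Fin 1) (Fin 1) ℝ))⁻¹ * P := by
      rw [hInv11', hMdef]
      congr 1
      rw [Matrix.mul_smul, Matrix.mul_one, Matrix.smul_mul]
      congr 1
    have hMpd : M.PosDef := by
      refine posDef_iff_dotProduct_mulVec.mpr ⟨?_, ?_⟩
      · show Mᴴ = M
        have hQsym : ∀ i j, Q j i = Q i j := fun i j => by
          simp only [hQdef, toBlocks₂₂, of_apply]; exact hBsym _ _
        ext i j
        simp only [hMdef, conjTranspose_apply, Matrix.sub_apply, Matrix.smul_apply, star_trivial,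
          Matrix.mul_apply, transpose_apply, smul_eq_mul]
        rw [hQsym i j]
        congr 2
        exact Finset.sum_congr rfl (fun k _ => mul_comm _ _)
      · intro y hy
        have hxy : (-(((a • (1 : Matrix (Fin 1) (Fin 1) ℝ))⁻¹ * P) *ᵥ y) ⊕ᵥ y) ≠ 0 := by
          intro h; apply hy; funext i
          have := congrFun h (Sum.inr i); simpa using this
        have hpos := hBpd.dotProduct_mulVec_pos hxy
        rw [hBblocks] at hpos
        have herm : (a • (1 : Matrix (Fin 1) (Fin 1) ℝ)).IsHermitian := by
          show _ = _; ext i j; fin_cases i; fin_cases j; simp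
        have hPH : Pᴴ = Pᵀ := by ext i j; simp
        have := schur_complement_eq₁₁ (A := a • (1 : Matrix (Fin 1) (Fin 1) ℝ)) P Q
          (-(((a • (1 : Matrix (Fin 1) (Fin 1) ℝ))⁻¹ * P) *ᵥ y)) y herm
        rw [hPH] at this
        rw [dotProduct_mulVec, this, neg_add_cancel] at hpos
        simp only [star_trivial] at hpos ⊢
        rw [← hPH, ← hSchur] at hpos
        simpa [dotProduct_mulVec] using hpos
    have hMoff : ∀ i j, i ≠ j → M i j ≤ 0 := by
      intro i j hij
      have h1 : Q i j ≤ 0 := hBoff _ _ (by simp [hij])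
      have h2 : 0 ≤ (Pᵀ * P) i j := by
        rw [Matrix.mul_apply]
        apply Finset.sum_nonneg
        intro k _
        have hk : k = 0 := Subsingleton.elim k 0
        rw [hk]
        simpa [transpose_apply] using
          mul_nonneg (neg_nonneg.mpr (hP0 i)) (neg_nonneg.mpr (hP0 j))
      have : a⁻¹ * (Pᵀ * P) i j ≥ 0 := mul_nonneg (inv_nonneg.mpr ha.le) h2
      simp only [hMdef, Matrix.sub_apply, Matrix.smul_apply, smul_eq_mul]
      linarith
    obtain ⟨C', hC'0, hC'mul⟩ := IH M hMpd hMoff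
    have hWM : C' * C'ᵀ * M = 1 := mul_eq_one_comm.mp hC'mul
    set s : ℝ := Real.sqrt a with hs_def
    have hs : s * s = a := Real.mul_self_sqrt ha.le
    have hs0 : 0 < s := Real.sqrt_pos.mpr ha
    set Cb : Matrix (Fin 1 ⊕ Fin d) (Fin 1 ⊕ Fin d) ℝ :=
      fromBlocks (s⁻¹ • 1) (a⁻¹ • (-(P * C'))) 0 C' with hCbdef
    have hCb0 : ∀ i j, 0 ≤ Cb i j := by
      rintro (i | i) (j | j)
      · fin_cases i; fin_cases j
        simp [hCbdef, fromBlocks, inv_nonneg.mpr hs0.le]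
      · fin_cases i
        simp only [hCbdef, fromBlocks, of_apply, Sum.elim_inl, Sum.elim_inr, Matrix.smul_apply,
          Matrix.neg_apply, Matrix.mul_apply, smul_eq_mul]
        rw [← Finset.sum_neg_distrib]
        apply mul_nonneg (inv_nonneg.mpr ha.le)
        apply Finset.sum_nonneg
        intro k _
        rw [neg_mul_eq_neg_mul]
        exact mul_nonneg (by simpa using hP0 k) (hC'0 k j)
      · simp [hCbdef, fromBlocks]
      · simpa [hCbdef, fromBlocks] using hC'0 i j
    have hQM : Q = M + a⁻¹ • (Pᵀ * P) := by rw [hMdef]; abel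
    have hss : s⁻¹ * s⁻¹ = a⁻¹ := by rw [← mul_inv, hs]
    have h1 : ∀ X : Matrix (Fin d) (Fin 1) ℝ, M * (C' * (C'ᵀ * X)) = X := fun X => by
      rw [← Matrix.mul_assoc, ← Matrix.mul_assoc, Matrix.mul_assoc M, hC'mul, Matrix.one_mul]
    have hmain : B * (Cb * Cbᵀ) = 1 := by
      rw [hBblocks, hCbdef, fromBlocks_transpose, fromBlocks_multiply, fromBlocks_multiply,
        ← fromBlocks_one]
      rw [fromBlocks_inj]
      refine ⟨?_, ?_, ?_, ?_⟩ <;>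
        simp only [hQM, transpose_smul, transpose_neg, transpose_one, transpose_zero,
          transpose_mul, transpose_transpose, Matrix.smul_mul, Matrix.mul_smul,
          Matrix.mul_neg, Matrix.neg_mul, Matrix.mul_zero, Matrix.zero_mul,
          Matrix.mul_one, Matrix.one_mul, zero_add, add_zero,
          Matrix.mul_add, Matrix.add_mul, smul_smul, smul_neg, neg_neg,
          Matrix.mul_assoc, hss, mul_assoc, mul_inv_cancel₀ ha', inv_mul_cancel₀ ha',
          one_smul, one_mul, mul_one, smul_zero, neg_smul, smul_add, smul_neg,
          hC'mul, h1] <;>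
        abel
    refine ⟨Cb.submatrix e.symm e.symm, fun i j => hCb0 _ _, ?_⟩
    have : A = B.submatrix e.symm e.symm := by
      rw [hBdef]; ext i j; simp
    rw [this, transpose_submatrix, submatrix_mul_equiv, submatrix_mul_equiv, hmain,
      submatrix_one_equiv]

/-- Condition (II) implies Condition (III): a symmetric positive definite matrix whose
inverse has nonpositive off-diagonal entries is completely positive, i.e., it factors
as `C * Cᵀ` with all entries of `C` nonnegative. -/
theorem completelyPositive_of_inv_offdiag_nonpos
    (d : ℕ) (S : Matrix (Fin d) (Fin d) ℝ)
    (hS : S.PosDef)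
    (hinv : ∀ i j : Fin d, i ≠ j → S⁻¹ i j ≤ 0) :
    ∃ C : Matrix (Fin d) (Fin d) ℝ, (∀ i j, 0 ≤ C i j) ∧ S = C * Cᵀ := by
  obtain ⟨C, hC0, hCmul⟩ := key_lemma d S⁻¹ hS.inv hinv
  refine ⟨C, hC0, ?_⟩
  have h1 : S⁻¹⁻¹ = C * Cᵀ := inv_eq_right_inv hCmul
  rwa [Matrix.nonsing_inv_nonsing_inv S (isUnit_iff_ne_zero.mpr hS.det_pos.ne')] at h1
end

section
/- For every integer n ≥ 2, every real number y > 1, and all real numbers u_1, …, u_n ∈ (0,1) with u_1 + ⋯ + u_n = 1, one has 1/(y − 1) > ∑_{i=1}^n 1/(y^{1/u_i} − 1). -/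
/-! Bernoulli's inequality `y ^ p - 1 > p (y - 1)` for `p = 1 / uᵢ > 1` gives
`1 / (y ^ (1 / uᵢ) - 1) < uᵢ / (y - 1)`; summing over `i` and using `∑ uᵢ = 1` yields the claim. -/

open Finset

lemma mul_sub_one_lt_rpow_sub_one {y p : ℝ} (hy₀ : 0 ≤ y) (hy₁ : y ≠ 1) (hp : 1 < p) :
    p * (y - 1) < y ^ p - 1 := by
  have h := one_add_mul_self_lt_rpow_one_add (s := y - 1) (by linarith) (sub_ne_zero.mpr hy₁) hp
  rw [add_sub_cancel] at h
  linarith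

lemma one_div_rpow_one_div_sub_one_lt {y u : ℝ} (hy : 1 < y) (hu₀ : 0 < u) (hu₁ : u < 1) :
    1 / (y ^ (1 / u) - 1) < u / (y - 1) := by
  have hp : 1 < 1 / u := one_lt_one_div hu₀ hu₁
  have hpos : 0 < 1 / u * (y - 1) := mul_pos (by positivity) (by linarith)
  calc 1 / (y ^ (1 / u) - 1) < 1 / (1 / u * (y - 1)) :=
        one_div_lt_one_div_of_lt hpos (mul_sub_one_lt_rpow_sub_one (by linarith) hy.ne' hp)
    _ = u / (y - 1) := by field_simp

theorem one_div_sub_one_gt_sum_rpow_general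
    (n : ℕ) (y : ℝ) (hy : 1 < y)
    (u : Fin n → ℝ) (hu : ∀ i, u i ∈ Set.Ioo (0 : ℝ) 1)
    (hsum : ∑ i, u i = 1) :
    1 / (y - 1) > ∑ i, 1 / (y ^ (1 / u i) - 1) := by
  have hne : (univ : Finset (Fin n)).Nonempty := nonempty_of_sum_ne_zero (hsum ▸ one_ne_zero)
  calc ∑ i, 1 / (y ^ (1 / u i) - 1) < ∑ i, u i / (y - 1) :=
        sum_lt_sum_of_nonempty hne fun i _ ↦ one_div_rpow_one_div_sub_one_lt hy (hu i).1 (hu i).2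
    _ = 1 / (y - 1) := by rw [← sum_div, hsum]

/-- Lemma A.1: for `n ≥ 2`, `y > 1` and `u₁, …, uₙ ∈ (0,1)` summing to `1`,
`1/(y − 1) > ∑ᵢ 1/(y^(1/uᵢ) − 1)`. -/
theorem one_div_sub_one_gt_sum_rpow
    (n : ℕ) (hn : 2 ≤ n) (y : ℝ) (hy : 1 < y)
    (u : Fin n → ℝ) (hu : ∀ i, u i ∈ Set.Ioo (0 : ℝ) 1)
    (hsum : ∑ i, u i = 1) :
    1 / (y - 1) > ∑ i, 1 / (y ^ (1 / u i) - 1) :=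
  one_div_sub_one_gt_sum_rpow_general n y hy u hu hsum
end

section
/- For every integer n ≥ 1, every real number y > 1, and all real numbers u_1, …, u_n ∈ (0,1] with u_1 + ⋯ + u_n = 1, one has 1/(y − 1) ≥ ∑_{i=1}^n 1/(y^{1/u_i} − 1). -/
/-! Bernoulli's inequality `y ^ p - 1 ≥ p (y - 1)` for `p = 1 / uᵢ ≥ 1` bounds the `i`-th term
by `uᵢ / (y - 1)`, and these bounds sum to `1 / (y - 1)`. -/

lemma one_div_rpow_one_div_sub_one_le {y u : ℝ} (hy : 1 < y) (hu : u ∈ Set.Ioc 0 1) :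
    1 / (y ^ (1 / u) - 1) ≤ u / (y - 1) := by
  obtain ⟨hu0, hu1⟩ := hu
  have bernoulli : 1 + 1 / u * (y - 1) ≤ y ^ (1 / u) := by
    simpa using
      one_add_mul_self_le_rpow_one_add (by linarith : -1 ≤ y - 1) (one_le_one_div hu0 hu1)
  have hy1 : 0 < y - 1 := sub_pos.2 hy
  calc 1 / (y ^ (1 / u) - 1) ≤ 1 / (1 / u * (y - 1)) :=
        one_div_le_one_div_of_le (by positivity) (by linarith)
    _ = u / (y - 1) := by field_simp

theorem one_div_sub_one_ge_sum_rpow_general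
    (n : ℕ) (y : ℝ) (hy : 1 < y)
    (u : Fin n → ℝ) (hu : ∀ i, u i ∈ Set.Ioc (0 : ℝ) 1)
    (hsum : ∑ i, u i = 1) :
    1 / (y - 1) ≥ ∑ i, 1 / (y ^ (1 / u i) - 1) :=
  calc ∑ i, 1 / (y ^ (1 / u i) - 1) ≤ ∑ i, u i / (y - 1) :=
        Finset.sum_le_sum fun i _ => one_div_rpow_one_div_sub_one_le hy (hu i)
    _ = 1 / (y - 1) := by rw [← Finset.sum_div, hsum]

/-- Non-strict version of Lemma A.1: for `n ≥ 1`, `y > 1` and `u₁, …, uₙ ∈ (0,1]`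
summing to `1`, `1/(y − 1) ≥ ∑ᵢ 1/(y^(1/uᵢ) − 1)`. -/
theorem one_div_sub_one_ge_sum_rpow
    (n : ℕ) (hn : 1 ≤ n) (y : ℝ) (hy : 1 < y)
    (u : Fin n → ℝ) (hu : ∀ i, u i ∈ Set.Ioc (0 : ℝ) 1)
    (hsum : ∑ i, u i = 1) :
    1 / (y - 1) ≥ ∑ i, 1 / (y ^ (1 / u i) - 1) :=
  one_div_sub_one_ge_sum_rpow_general n y hy u hu hsum
end

section
/- Let ι be a finite index set, let ℓ : ι → ℕ be a family of nonnegative integers, and set L = ∑_{i ∈ ι} ℓ_i. Then the multinomial coefficient with doubled entries dominates the original one: (2L)! · ∏_{i ∈ ι} (ℓ_i)! ≥ L! · ∏_{i ∈ ι} (2 ℓ_i)!; equivalently, (2L)!/∏_{i}(2ℓ_i)! ≥ L!/∏_i (ℓ_i)!. -/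
open Finset

lemma choose_two_mul_ge (n k : ℕ) : (2 * n).choose (2 * k) ≥ n.choose k := by
  rcases le_or_gt k n with h | h
  · have hmem : (k, k) ∈ Finset.HasAntidiagonal.antidiagonal (2 * k) := by
      simp [Finset.HasAntidiagonal.mem_antidiagonal, two_mul]
    have := Finset.single_le_sum
      (f := fun ij : ℕ × ℕ => n.choose ij.1 * n.choose ij.2)
      (fun i _ => Nat.zero_le _) hmem
    have hv : (2 * n).choose (2 * k)
        = ∑ ij ∈ Finset.HasAntidiagonal.antidiagonal (2 * k), n.choose ij.1 * n.choose ij.2 := by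
      rw [two_mul n, Nat.add_choose_eq]
    rw [hv]
    calc n.choose k ≤ n.choose k * n.choose k :=
          Nat.le_mul_of_pos_right _ (Nat.choose_pos h)
      _ ≤ _ := this
  · rw [Nat.choose_eq_zero_of_lt h]
    exact Nat.zero_le _

lemma doubled_multinomial_finset (ι : Type*) (ℓ : ι → ℕ) (s : Finset ι) :
    (2 * ∑ i ∈ s, ℓ i).factorial * ∏ i ∈ s, (ℓ i).factorial
      ≥ (∑ i ∈ s, ℓ i).factorial * ∏ i ∈ s, (2 * ℓ i).factorial := by
  classical
  induction s using Finset.induction_on with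
  | empty => simp
  | @insert a s ha ih =>
    rw [Finset.sum_insert ha, Finset.prod_insert ha, Finset.prod_insert ha]
    set S := ∑ i ∈ s, ℓ i with hS
    set P := ∏ i ∈ s, (ℓ i).factorial
    set Q := ∏ i ∈ s, (2 * ℓ i).factorial
    have h1 : (ℓ a + S).choose (ℓ a) * (ℓ a).factorial * S.factorial = (ℓ a + S).factorial := by
      have := Nat.choose_mul_factorial_mul_factorial
        (show ℓ a ≤ ℓ a + S from Nat.le_add_right _ _)
      simpa using this
    have h2 : (2 * ℓ a + 2 * S).choose (2 * ℓ a) * (2 * ℓ a).factorial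
        * (2 * S).factorial = (2 * ℓ a + 2 * S).factorial := by
      have := Nat.choose_mul_factorial_mul_factorial
        (show 2 * ℓ a ≤ 2 * ℓ a + 2 * S from Nat.le_add_right _ _)
      simpa using this
    have hmul : 2 * (ℓ a + S) = 2 * ℓ a + 2 * S := by ring
    rw [hmul, ← h1, ← h2]
    have hc : (2 * ℓ a + 2 * S).choose (2 * ℓ a) ≥ (ℓ a + S).choose (ℓ a) := by
      have := choose_two_mul_ge (ℓ a + S) (ℓ a)
      rwa [hmul] at this
    calc (ℓ a + S).choose (ℓ a) * (ℓ a).factorial * S.factorial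
          * ((2 * ℓ a).factorial * Q)
        = ((ℓ a + S).choose (ℓ a) * (ℓ a).factorial * (2 * ℓ a).factorial)
          * (S.factorial * Q) := by ring
      _ ≤ ((2 * ℓ a + 2 * S).choose (2 * ℓ a) * (ℓ a).factorial * (2 * ℓ a).factorial)
          * ((2 * S).factorial * P) :=
            Nat.mul_le_mul
              (Nat.mul_le_mul_right _ (Nat.mul_le_mul_right _ hc)) ih
      _ = (2 * ℓ a + 2 * S).choose (2 * ℓ a) * (2 * ℓ a).factorial * (2 * S).factorial
          * ((ℓ a).factorial * P) := by ring

/-- For nonnegative integers `ℓ i` with sum `L`, the multinomial coefficient with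
doubled entries dominates the original one:
`(2L)! ⬝ ∏ᵢ (ℓᵢ)! ≥ L! ⬝ ∏ᵢ (2ℓᵢ)!`. -/
theorem doubled_multinomial_ge
    (ι : Type*) [Fintype ι] (ℓ : ι → ℕ) :
    (2 * ∑ i, ℓ i).factorial * ∏ i, (ℓ i).factorial
      ≥ (∑ i, ℓ i).factorial * ∏ i, (2 * ℓ i).factorial := by
  exact doubled_multinomial_finset ι ℓ Finset.univ
end

section
/- Let d be a positive integer and let (ℓ_{ij})_{1 ≤ i,j ≤ d} be nonnegative integers. For each j set L_j = ℓ_{1j} + ⋯ + ℓ_{dj}. Then ∏_{j=1}^d (2 L_j)!/∏_{i=1}^d (2 ℓ_{ij})! ≥ ∏_{j=1}^d L_j!/∏_{i=1}^d (ℓ_{ij})!. -/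
open Finset

/-- Vandermonde step: `C(a+b, a) ≤ C(2(a+b), 2a)`. -/
lemma choose_le_choose_two_mul (a b : ℕ) :
    (a + b).choose a ≤ (2 * (a + b)).choose (2 * a) := by
  have h : (2 * (a + b)).choose (2 * a)
      = ∑ ij ∈ Finset.HasAntidiagonal.antidiagonal (2 * a),
          (a + b).choose ij.1 * (a + b).choose ij.2 := by
    rw [two_mul (a + b)]; exact Nat.add_choose_eq _ _ _
  rw [h]
  have hmem : ((a, a) : ℕ × ℕ) ∈ Finset.HasAntidiagonal.antidiagonal (2 * a) := by
    simp [Finset.mem_antidiagonal, two_mul]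
  calc (a + b).choose a ≤ (a + b).choose a * (a + b).choose a :=
        Nat.le_mul_of_pos_right _ (Nat.choose_pos (Nat.le_add_right a b))
    _ ≤ _ := Finset.single_le_sum (f := fun ij : ℕ × ℕ => (a + b).choose ij.1 * (a + b).choose ij.2) (fun i _ => Nat.zero_le _) hmem

/-- Monotonicity: `multinomial f ≤ multinomial (2f)`. -/
lemma multinomial_le_multinomial_two_mul {ι : Type*} (s : Finset ι) (f : ι → ℕ) :
    Nat.multinomial s f ≤ Nat.multinomial s (fun i => 2 * f i) := by
  induction s using Finset.cons_induction with
  | empty => simp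
  | cons a s ha ih =>
    rw [Nat.multinomial_cons, Nat.multinomial_cons]
    have hsum : ∑ i ∈ s, 2 * f i = 2 * ∑ i ∈ s, f i := by rw [Finset.mul_sum]
    refine Nat.mul_le_mul ?_ ih
    rw [hsum, ← Nat.mul_add]
    exact choose_le_choose_two_mul (f a) (∑ i ∈ s, f i)

/-- Inequality (7) of the paper: for a `d × d` array `ℓ` of nonnegative integers with
column sums `L j = ∑ i, ℓ i j`, one has
`∏ⱼ (2Lⱼ)!/∏ᵢ(2ℓᵢⱼ)! ≥ ∏ⱼ Lⱼ!/∏ᵢ(ℓᵢⱼ)!`. -/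
theorem prod_doubled_multinomial_ge
    (d : ℕ) (hd : 0 < d) (ℓ : Fin d → Fin d → ℕ) :
    ∏ j, ((2 * ∑ i, ℓ i j).factorial : ℚ) / ∏ i, ((2 * ℓ i j).factorial : ℚ)
      ≥ ∏ j, ((∑ i, ℓ i j).factorial : ℚ) / ∏ i, ((ℓ i j).factorial : ℚ) := by
  have key : ∀ (g : Fin d → ℕ),
      ((∑ i, g i).factorial : ℚ) / ∏ i, ((g i).factorial : ℚ)
        = (Nat.multinomial Finset.univ g : ℚ) := by
    intro g
    have hspec := Nat.multinomial_spec Finset.univ g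
    have hpos : (0 : ℚ) < ∏ i, ((g i).factorial : ℚ) :=
      Finset.prod_pos fun i _ => by exact_mod_cast (g i).factorial_pos
    rw [div_eq_iff (ne_of_gt hpos), ← Nat.cast_prod, ← Nat.cast_mul, mul_comm, hspec]
  refine ge_iff_le.mpr (Finset.prod_le_prod (fun j _ => ?_) (fun j _ => ?_))
  · rw [key]; exact_mod_cast Nat.zero_le _
  · have h2 : (2 * ∑ i, ℓ i j).factorial = (∑ i, 2 * ℓ i j).factorial := by
      rw [Finset.mul_sum]
    rw [key, h2, key fun i => 2 * ℓ i j]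
    exact_mod_cast multinomial_le_multinomial_two_mul Finset.univ fun i => ℓ i j
end

section
/- Let d be a positive integer, let n_1, …, n_d be nonnegative integers, and let (ℓ_{ij})_{1 ≤ i,j ≤ d} be nonnegative integers satisfying ℓ_{i1} + ⋯ + ℓ_{id} = n_i for each i. For each j set L_j = ℓ_{1j} + ⋯ + ℓ_{dj}. Then, as an inequality between rational numbers, [∏_{j=1}^d (2 L_j)!/(2^{L_j} L_j!)] · ∏_{i=1}^d (2 n_i)!/∏_{j=1}^d (2 ℓ_{ij})! ≥ ∏_{i=1}^d [(2 n_i)!/(2^{n_i} n_i!)] · [n_i!/∏_{j=1}^d (ℓ_{ij})!]. -/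
open Finset

lemma choose_double (a b : ℕ) : (a + b).choose a ≤ (2*a + 2*b).choose (2*a) := by
  have h : (2*a + 2*b) = (a+b) + (a+b) := by ring
  have heq := Nat.add_choose_eq (a+b) (a+b) (2*a)
  rw [h, heq]
  have hmem : (a, a) ∈ Finset.HasAntidiagonal.antidiagonal (2*a) := by
    simp [two_mul]
  calc (a+b).choose a ≤ (a+b).choose a * (a+b).choose a :=
        Nat.le_mul_of_pos_right _ (Nat.choose_pos (Nat.le_add_right a b))
    _ ≤ _ := Finset.single_le_sum (f := fun ij => (a+b).choose ij.1 * (a+b).choose ij.2) (fun i _ => Nat.zero_le _) hmem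

lemma key {α : Type*} (s : Finset α) (f : α → ℕ) :
    (∑ i ∈ s, f i).factorial * ∏ i ∈ s, (2 * f i).factorial ≤
    (2 * ∑ i ∈ s, f i).factorial * ∏ i ∈ s, (f i).factorial := by
  induction s using Finset.cons_induction with
  | empty => simp
  | cons a s ha ih =>
    rw [sum_cons, prod_cons, prod_cons]
    set A := f a; set B := ∑ i ∈ s, f i
    have e1 : (A + B).factorial = (A+B).choose A * A.factorial * B.factorial := by
      have := Nat.choose_mul_factorial_mul_factorial (Nat.le_add_right A B)
      simpa using this.symm
    have e2 : (2*(A + B)).factorial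
        = (2*A+2*B).choose (2*A) * (2*A).factorial * (2*B).factorial := by
      have h2 : 2*(A+B) = 2*A + 2*B := by ring
      have := Nat.choose_mul_factorial_mul_factorial (Nat.le_add_right (2*A) (2*B))
      rw [h2]
      simpa using this.symm
    rw [e1, e2]
    calc (A+B).choose A * A.factorial * B.factorial
          * ((2*A).factorial * ∏ i ∈ s, (2 * f i).factorial)
        = (A+B).choose A * ((A.factorial * (2*A).factorial)
            * (B.factorial * ∏ i ∈ s, (2 * f i).factorial)) := by ring
      _ ≤ (2*A+2*B).choose (2*A) * ((A.factorial * (2*A).factorial)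
            * ((2*B).factorial * ∏ i ∈ s, (f i).factorial)) :=
          Nat.mul_le_mul (choose_double A B) (Nat.mul_le_mul_left _ ih)
      _ = (2*A+2*B).choose (2*A) * (2*A).factorial * (2*B).factorial
          * (A.factorial * ∏ i ∈ s, (f i).factorial) := by ring

lemma natmain (d : ℕ) (n : Fin d → ℕ) (ℓ : Fin d → Fin d → ℕ)
    (hrow : ∀ i, ∑ j, ℓ i j = n i) :
    (∏ i, ((2 * n i).factorial * (n i).factorial)) *
      ((∏ j, 2 ^ (∑ i, ℓ i j) * (∑ i, ℓ i j).factorial) * ∏ i, ∏ j, (2 * ℓ i j).factorial)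
    ≤ ((∏ j, (2 * ∑ i, ℓ i j).factorial) * ∏ i, (2 * n i).factorial) *
      ∏ i, (2 ^ n i * (n i).factorial * ∏ j, (ℓ i j).factorial) := by
  have hpow : (∏ j, 2 ^ (∑ i, ℓ i j) : ℕ) = ∏ i, 2 ^ n i := by
    rw [Finset.prod_pow_eq_pow_sum, Finset.prod_pow_eq_pow_sum, Finset.sum_comm]
    congr 1
    exact Finset.sum_congr rfl fun i _ => hrow i
  have hkey : ∏ j, ((∑ i, ℓ i j).factorial * ∏ i, (2 * ℓ i j).factorial)
      ≤ ∏ j, ((2 * ∑ i, ℓ i j).factorial * ∏ i, (ℓ i j).factorial) :=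
    Finset.prod_le_prod' fun j _ => key univ (fun i => ℓ i j)
  simp only [Finset.prod_mul_distrib] at hkey ⊢
  rw [Finset.prod_comm (f := fun i j => (2 * ℓ i j).factorial),
      Finset.prod_comm (f := fun i j => (ℓ i j).factorial), hpow]
  calc ((∏ i, (2 * n i).factorial) * ∏ i, (n i).factorial) *
        (((∏ i, 2 ^ n i) * ∏ j, (∑ i, ℓ i j).factorial) * ∏ j, ∏ i, (2 * ℓ i j).factorial)
      = ((∏ i, (2 * n i).factorial) * (∏ i, (n i).factorial) * ∏ i, 2 ^ n i) *
        ((∏ j, (∑ i, ℓ i j).factorial) * ∏ j, ∏ i, (2 * ℓ i j).factorial) := by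
        ac_rfl
    _ ≤ ((∏ i, (2 * n i).factorial) * (∏ i, (n i).factorial) * ∏ i, 2 ^ n i) *
        ((∏ j, (2 * ∑ i, ℓ i j).factorial) * ∏ j, ∏ i, (ℓ i j).factorial) :=
        Nat.mul_le_mul_left _ hkey
    _ = ((∏ j, (2 * ∑ i, ℓ i j).factorial) * ∏ i, (2 * n i).factorial) *
        (((∏ i, 2 ^ n i) * ∏ i, (n i).factorial) * ∏ j, ∏ i, (ℓ i j).factorial) := by
        ac_rfl

/-- The coefficient-wise comparison between expansions (5) and (6) in the proof of
Proposition 2: for a `d × d` array `ℓ` of nonnegative integers with row sums `n i` and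
column sums `L j = ∑ i, ℓ i j`, one has
`[∏ⱼ (2Lⱼ)!/(2^{Lⱼ} Lⱼ!)] ⬝ ∏ᵢ (2nᵢ)!/∏ⱼ(2ℓᵢⱼ)!
  ≥ ∏ᵢ [(2nᵢ)!/(2^{nᵢ} nᵢ!)] ⬝ [nᵢ!/∏ⱼ(ℓᵢⱼ)!]`. -/
theorem coefficientwise_comparison
    (d : ℕ) (hd : 0 < d) (n : Fin d → ℕ) (ℓ : Fin d → Fin d → ℕ)
    (hrow : ∀ i, ∑ j, ℓ i j = n i) :
    (∏ j, (((2 * ∑ i, ℓ i j).factorial : ℚ) /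
        (2 ^ (∑ i, ℓ i j) * ((∑ i, ℓ i j).factorial : ℚ)))) *
      ∏ i, (((2 * n i).factorial : ℚ) / ∏ j, ((2 * ℓ i j).factorial : ℚ))
    ≥ ∏ i, (((2 * n i).factorial : ℚ) / (2 ^ n i * ((n i).factorial : ℚ))) *
        (((n i).factorial : ℚ) / ∏ j, ((ℓ i j).factorial : ℚ)) := by
  rw [ge_iff_le]
  simp only [div_mul_div_comm]
  rw [Finset.prod_div_distrib, Finset.prod_div_distrib, Finset.prod_div_distrib,
    div_mul_div_comm, div_le_div_iff₀ (by positivity) (by positivity)]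
  exact_mod_cast natmain d n ℓ hrow
end

section
/- Let d ≥ 1 and let ℓ_1, …, ℓ_d be nonnegative integers with sum L = ℓ_1 + ⋯ + ℓ_d ≥ 1. Then the function g : [0, ∞) → ℝ defined by g(a) = Γ(a L + 1)/∏_{i=1}^d Γ(a ℓ_i + 1) is monotone non-decreasing on [0, ∞), where Γ denotes Euler's gamma function. -/
open Finset Filter Topology

private lemma gr_two_var (a b c x y : ℝ) (ha : 0 ≤ a) (hab : a ≤ b) (hc : 0 < c)
    (hx : 0 ≤ x) (hy : 0 ≤ y) :
    (b * (x + y) + c) * ((a * x + c) * (a * y + c)) ≤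
      (b * x + c) * (b * y + c) * (a * (x + y) + c) := by
  have hb : 0 ≤ b := ha.trans hab
  have key : (b * x + c) * (b * y + c) * (a * (x + y) + c) -
      (b * (x + y) + c) * ((a * x + c) * (a * y + c)) =
      (b - a) * x * y * (a * b * (x + y) + c * (b + a)) := by ring
  have h1 : 0 ≤ (b - a) * x * y * (a * b * (x + y) + c * (b + a)) := by
    apply mul_nonneg (mul_nonneg (mul_nonneg (sub_nonneg.2 hab) hx) hy)
    have : 0 ≤ a * b * (x + y) := mul_nonneg (mul_nonneg ha hb) (by linarith)
    nlinarith
  linarith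

private lemma gr_prod_lem {ι : Type*} [DecidableEq ι] (a b c : ℝ) (ha : 0 ≤ a) (hab : a ≤ b)
    (hc : 0 < c) (s : Finset ι) (x : ι → ℝ) (hx : ∀ i, 0 ≤ x i) :
    (b * ∑ i ∈ s, x i + c) * ∏ i ∈ s, (a * x i + c) ≤
      (a * ∑ i ∈ s, x i + c) * ∏ i ∈ s, (b * x i + c) := by
  have hb : 0 ≤ b := ha.trans hab
  induction s using Finset.induction_on with
  | empty => simp
  | @insert i s hi ih =>
    rw [sum_insert hi, prod_insert hi, prod_insert hi]
    set S := ∑ i ∈ s, x i with hS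
    have hS0 : 0 ≤ S := sum_nonneg fun i _ => hx i
    have hPa : 0 ≤ ∏ i ∈ s, (a * x i + c) :=
      prod_nonneg fun i _ => by have := hx i; positivity
    have hPb : 0 ≤ ∏ i ∈ s, (b * x i + c) :=
      prod_nonneg fun i _ => by have := hx i; positivity
    have haS : 0 < a * S + c := by nlinarith [mul_nonneg ha hS0]
    have hbS : 0 < b * S + c := by nlinarith [mul_nonneg hb hS0]
    have H1 := gr_two_var a b c (x i) S ha hab hc (hx i) hS0
    have hxi := hx i
    have hq : 0 ≤ (b * x i + c) * (b * S + c) * (a * (x i + S) + c) :=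
      mul_nonneg (mul_nonneg (by nlinarith [mul_nonneg hb hxi]) hbS.le)
        (by nlinarith [mul_nonneg ha (add_nonneg hxi hS0)])
    have H3 := mul_le_mul H1 ih (by nlinarith [mul_nonneg hb hS0]) hq
    refine le_of_mul_le_mul_right ?_ (mul_pos haS hbS)
    nlinarith [H3]

/-- For nonnegative integers `ℓ₁, …, ℓ_d` with sum `L ≥ 1`, the map
`a ↦ Γ(aL + 1) / ∏ᵢ Γ(aℓᵢ + 1)` is non-decreasing on `[0, ∞)`. -/
theorem monotoneOn_gamma_ratio
    (d : ℕ) (hd : 1 ≤ d) (ℓ : Fin d → ℕ) (hL : 1 ≤ ∑ i, ℓ i) :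
    MonotoneOn
      (fun a : ℝ =>
        Real.Gamma (a * (∑ i, ℓ i : ℕ) + 1) / ∏ i, Real.Gamma (a * (ℓ i : ℕ) + 1))
      (Set.Ici 0) := by
  set L : ℕ := ∑ i, ℓ i with hLdef
  intro a ha b hb hab
  simp only [Set.mem_Ici] at ha hb
  have hb' : (0:ℝ) ≤ b := ha.trans hab
  -- limit statements
  have hlim : ∀ x : ℝ, 0 ≤ x →
      Tendsto (fun n => Real.GammaSeq (x * (L:ℝ) + 1) n /
        ∏ i, Real.GammaSeq (x * (ℓ i : ℝ) + 1) n) atTop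
        (𝓝 (Real.Gamma (x * (L:ℝ) + 1) / ∏ i, Real.Gamma (x * (ℓ i : ℝ) + 1))) := by
    intro x hx
    refine Tendsto.div (Real.GammaSeq_tendsto_Gamma _) ?_ ?_
    · exact tendsto_finset_prod _ fun i _ => Real.GammaSeq_tendsto_Gamma _
    · refine ne_of_gt (prod_pos fun i _ => Real.Gamma_pos_of_pos ?_)
      have : 0 ≤ x * (ℓ i : ℝ) := mul_nonneg hx (Nat.cast_nonneg _)
      linarith
  refine le_of_tendsto_of_tendsto (hlim a ha) (hlim b hb)
    (eventually_atTop.2 ⟨1, fun n hn => ?_⟩)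
  -- per-n monotonicity
  have hn0 : (0:ℝ) < n := by exact_mod_cast hn
  have hfac : (0:ℝ) < (n.factorial : ℝ) := by exact_mod_cast n.factorial_pos
  set A : ℝ → ℝ := fun x => ∏ i, ∏ j ∈ range (n + 1), (x * (ℓ i : ℝ) + 1 + j) with hA
  set B : ℝ → ℝ := fun x => ∏ j ∈ range (n + 1), (x * (L:ℝ) + 1 + j) with hB
  set K : ℝ := (n:ℝ) ^ ((d:ℝ) - 1) * (n.factorial : ℝ) ^ (d - 1) with hK
  have hKpos : 0 < K := by
    apply mul_pos (Real.rpow_pos_of_pos hn0 _) (pow_pos hfac _)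
  have hApos : ∀ x : ℝ, 0 ≤ x → 0 < A x := by
    intro x hx
    refine prod_pos fun i _ => prod_pos fun j _ => ?_
    have h1 : 0 ≤ x * (ℓ i : ℝ) := mul_nonneg hx (Nat.cast_nonneg _)
    have h2 : (0:ℝ) ≤ j := Nat.cast_nonneg _
    linarith
  have hBpos : ∀ x : ℝ, 0 ≤ x → 0 < B x := by
    intro x hx
    refine prod_pos fun j _ => ?_
    have h1 : 0 ≤ x * (L : ℝ) := mul_nonneg hx (Nat.cast_nonneg _)
    have h2 : (0:ℝ) ≤ j := Nat.cast_nonneg _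
    linarith
  have hsumcast : ∑ i, (ℓ i : ℝ) = (L : ℝ) := by rw [hLdef]; push_cast; rfl
  -- rewrite F in terms of A, B, K
  have hF : ∀ x : ℝ, 0 ≤ x →
      Real.GammaSeq (x * (L:ℝ) + 1) n / ∏ i, Real.GammaSeq (x * (ℓ i : ℝ) + 1) n =
        A x / (B x * K) := by
    intro x hx
    have hsum : ∑ i : Fin d, (x * (ℓ i : ℝ) + 1) = x * (L:ℝ) + (d:ℝ) := by
      rw [Finset.sum_add_distrib, ← Finset.mul_sum, hsumcast]
      simp
    have e1 : ∏ i : Fin d, ((n:ℝ) ^ (x * (ℓ i : ℝ) + 1) * (n.factorial : ℝ)) =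
        (n:ℝ) ^ (x * (L:ℝ) + 1) * (n:ℝ) ^ ((d:ℝ) - 1) * (n.factorial : ℝ) ^ d := by
      rw [prod_mul_distrib, prod_const, card_univ, Fintype.card_fin,
        ← Real.rpow_sum_of_pos hn0, hsum,
        show x * (L:ℝ) + (d:ℝ) = (x * (L:ℝ) + 1) + ((d:ℝ) - 1) by ring,
        Real.rpow_add hn0]
    have e2 : ∏ i, Real.GammaSeq (x * (ℓ i : ℝ) + 1) n =
        (n:ℝ) ^ (x * (L:ℝ) + 1) * (n.factorial : ℝ) * K / A x := by
      simp only [Real.GammaSeq]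
      rw [Finset.prod_div_distrib, e1, hA]
      congr 1
      have hfd : (n.factorial : ℝ) ^ d = (n.factorial : ℝ) * (n.factorial : ℝ) ^ (d - 1) := by
        rw [← pow_succ', Nat.sub_add_cancel hd]
      rw [hfd, hK]; ring
    rw [e2, Real.GammaSeq]
    have hN : (n:ℝ) ^ (x * (L:ℝ) + 1) * (n.factorial : ℝ) ≠ 0 := by positivity
    rw [show (∏ j ∈ range (n+1), (x * (L:ℝ) + 1 + (j:ℝ))) = B x from rfl]
    field_simp
  dsimp only
  rw [hF a ha, hF b hb']
  -- main inequality
  have hj : ∀ j : ℕ,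
      (b * (L:ℝ) + 1 + j) * ∏ i, (a * (ℓ i : ℝ) + 1 + j) ≤
        (a * (L:ℝ) + 1 + j) * ∏ i, (b * (ℓ i : ℝ) + 1 + j) := by
    intro j
    have hc : (0:ℝ) < 1 + j := by positivity
    have := gr_prod_lem a b (1 + (j:ℝ)) ha hab hc Finset.univ (fun i => (ℓ i : ℝ))
      (fun i => Nat.cast_nonneg _)
    rw [hsumcast] at this
    simpa only [← add_assoc] using this
  have hAB : A a * B b ≤ A b * B a := by
    have swapa : A a = ∏ j ∈ range (n + 1), ∏ i, (a * (ℓ i : ℝ) + 1 + j) := prod_comm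
    have swapb : A b = ∏ j ∈ range (n + 1), ∏ i, (b * (ℓ i : ℝ) + 1 + j) := prod_comm
    rw [swapa, swapb, hB, ← prod_mul_distrib, ← prod_mul_distrib]
    refine prod_le_prod (fun j _ => ?_) (fun j _ => ?_)
    · apply mul_nonneg
      · refine prod_nonneg fun i _ => ?_
        have h1 : 0 ≤ a * (ℓ i : ℝ) := mul_nonneg ha (Nat.cast_nonneg _)
        have h2 : (0:ℝ) ≤ j := Nat.cast_nonneg _
        linarith
      · have h1 : 0 ≤ b * (L : ℝ) := mul_nonneg hb' (Nat.cast_nonneg _)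
        have h2 : (0:ℝ) ≤ j := Nat.cast_nonneg _
        linarith
    · rw [mul_comm]
      calc (b * (L:ℝ) + 1 + j) * ∏ i, (a * (ℓ i : ℝ) + 1 + j)
          ≤ (a * (L:ℝ) + 1 + j) * ∏ i, (b * (ℓ i : ℝ) + 1 + j) := hj j
        _ = (∏ i, (b * (ℓ i : ℝ) + 1 + j)) * (a * (L:ℝ) + 1 + j) := mul_comm _ _
  rw [div_le_div_iff₀ (by positivity) (by positivity)]
  calc A a * (B b * K) = (A a * B b) * K := by ring
    _ ≤ (A b * B a) * K := mul_le_mul_of_nonneg_right hAB hKpos.le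
    _ = A b * (B a * K) := by ring
end

section
/- Let d ≥ 1 and let ℓ_1, …, ℓ_d be nonnegative integers with sum L = ℓ_1 + ⋯ + ℓ_d ≥ 1. Then the function a ↦ log Γ(a L + 1) − ∑_{i=1}^d log Γ(a ℓ_i + 1) is convex on the interval [0, ∞), where Γ denotes Euler's gamma function. -/
open Real Set Filter Topology

lemma pair_convex {α β : ℝ} (hβ : 0 < β) (hβα : β ≤ α) :
    ConvexOn ℝ (Set.Ici 0) (fun a : ℝ => Real.log (a + α) - Real.log (a + β)) := by
  have hα : 0 < α := hβ.trans_le hβα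
  refine convexOn_of_hasDerivWithinAt2_nonneg (convex_Ici 0)
    (f' := fun a => (a + α)⁻¹ - (a + β)⁻¹)
    (f'' := fun a => -((a+α)^2)⁻¹ + ((a+β)^2)⁻¹) ?_ ?_ ?_ ?_
  · apply ContinuousOn.sub
    · apply ContinuousOn.log (by fun_prop)
      intro x hx; simp at hx; positivity
    · apply ContinuousOn.log (by fun_prop)
      intro x hx; simp at hx; positivity
  · intro x hx
    rw [interior_Ici] at hx
    have h1 : (0:ℝ) < x + α := by have := hx; simp at this; linarith
    have h2 : (0:ℝ) < x + β := by have := hx; simp at this; linarith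
    have d1 : HasDerivAt (fun a : ℝ => Real.log (a + α)) ((x+α)⁻¹) x := by
      simpa [Function.comp_def] using (Real.hasDerivAt_log h1.ne').comp x ((hasDerivAt_id x).add_const α)
    have d2 : HasDerivAt (fun a : ℝ => Real.log (a + β)) ((x+β)⁻¹) x := by
      simpa [Function.comp_def] using (Real.hasDerivAt_log h2.ne').comp x ((hasDerivAt_id x).add_const β)
    exact (d1.sub d2).hasDerivWithinAt
  · intro x hx
    rw [interior_Ici] at hx
    have h1 : (0:ℝ) < x + α := by have := hx; simp at this; linarith
    have h2 : (0:ℝ) < x + β := by have := hx; simp at this; linarith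
    have d1 : HasDerivAt (fun a : ℝ => (a + α)⁻¹) (-((x+α)^2)⁻¹) x := by
      simpa [Function.comp_def] using ((hasDerivAt_inv h1.ne').comp x ((hasDerivAt_id x).add_const α))
    have d2 : HasDerivAt (fun a : ℝ => (a + β)⁻¹) (-((x+β)^2)⁻¹) x := by
      simpa [Function.comp_def] using ((hasDerivAt_inv h2.ne').comp x ((hasDerivAt_id x).add_const β))
    have := d1.sub d2
    have heq : -((x+α)^2)⁻¹ - -((x+β)^2)⁻¹ = -((x+α)^2)⁻¹ + ((x+β)^2)⁻¹ := by ring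
    rw [heq] at this
    exact this.hasDerivWithinAt
  · intro x hx
    rw [interior_Ici] at hx
    have h1 : (0:ℝ) < x + α := by have := hx; simp at this; linarith
    have h2 : (0:ℝ) < x + β := by have := hx; simp at this; linarith
    have : ((x+α)^2)⁻¹ ≤ ((x+β)^2)⁻¹ := by
      apply inv_anti₀ (by positivity)
      nlinarith
    linarith

-- sum of convex functions over a Finset
lemma convexOn_finset_sum {ι : Type*} (s : Finset ι) (f : ι → ℝ → ℝ)
    (h : ∀ i ∈ s, ConvexOn ℝ (Set.Ici 0) (f i)) :
    ConvexOn ℝ (Set.Ici (0:ℝ)) (fun a => ∑ i ∈ s, f i a) := by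
  classical
  induction s using Finset.induction_on with
  | empty => simpa using convexOn_const 0 (convex_Ici 0)
  | insert j t hj ih =>
    simp only [Finset.sum_insert hj]
    exact (h j (Finset.mem_insert_self j t)).add
      (ih fun i hi => h i (Finset.mem_insert_of_mem hi))

-- sorted lists: dominance of counts implies pointwise comparison
lemma sorted_dom_pointwise (l₁ l₂ : List ℝ) (h₁ : l₁.Pairwise (· ≤ ·)) (h₂ : l₂.Pairwise (· ≤ ·))
    (hlen : l₁.length = l₂.length)
    (hdom : ∀ t : ℝ, l₁.countP (fun x => decide (x ≤ t)) ≤ l₂.countP (fun x => decide (x ≤ t)))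
    (i : ℕ) (hi : i < l₁.length) :
    l₂.get ⟨i, hlen ▸ hi⟩ ≤ l₁.get ⟨i, hi⟩ := by
  by_contra hcon
  push_neg at hcon
  set t := l₁.get ⟨i, hi⟩ with ht
  -- count in l₁ is at least i+1
  have c1 : i + 1 ≤ l₁.countP (fun x => decide (x ≤ t)) := by
    have hsub : (l₁.take (i+1)).Sublist l₁ := List.take_sublist _ _
    have hall : ∀ x ∈ l₁.take (i+1), (fun x => decide (x ≤ t)) x = true := by
      intro x hx
      rw [List.mem_take_iff_getElem] at hx
      obtain ⟨k, hk, rfl⟩ := hx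
      simp only [decide_eq_true_eq]
      have hk' : k < l₁.length := by
        have := hk; simp at this; omega
      have hki : k ≤ i := by simp at hk; omega
      have : l₁[k] ≤ l₁.get ⟨i, hi⟩ := by
        rcases hki.lt_or_eq with h | h
        · simpa using h₁.rel_get_of_lt (a := ⟨k, hk'⟩) (b := ⟨i, hi⟩) (Fin.mk_lt_mk.mpr h)
        · subst h; simp
      simpa [ht] using this
    have := List.Sublist.countP_le (p := fun x => decide (x ≤ t)) hsub
    have hlen' : (l₁.take (i+1)).length = i+1 := by simp; omega
    rw [List.countP_eq_length.mpr hall] at this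
    omega
  -- count in l₂ is at most i
  have c2 : l₂.countP (fun x => decide (x ≤ t)) ≤ i := by
    have hsplit : l₂ = l₂.take i ++ l₂.drop i := (List.take_append_drop i l₂).symm
    have hzero : (l₂.drop i).countP (fun x => decide (x ≤ t)) = 0 := by
      rw [List.countP_eq_zero]
      intro x hx
      rw [List.mem_iff_getElem] at hx
      obtain ⟨k, hk, rfl⟩ := hx
      rw [List.getElem_drop]
      simp only [decide_eq_true_eq, not_le]
      have hik : i ≤ i + k := Nat.le_add_right _ _
      have hlt : t < l₂.get ⟨i, hlen ▸ hi⟩ := hcon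
      have : l₂.get ⟨i, hlen ▸ hi⟩ ≤ l₂[i+k]'(by simp at hk; omega) := by
        rcases Nat.eq_or_lt_of_le hik with h | h
        · simp [List.get_eq_getElem, ← h]
        · simpa using h₂.rel_get_of_lt (a := ⟨i, hlen ▸ hi⟩)
            (b := ⟨i+k, by simp at hk; omega⟩) (Fin.mk_lt_mk.mpr h)
      linarith
    calc l₂.countP (fun x => decide (x ≤ t))
        = (l₂.take i).countP _ + (l₂.drop i).countP _ := by
          conv_lhs => rw [hsplit]
          rw [List.countP_append]
      _ ≤ (l₂.take i).length + 0 := by rw [hzero]; exact Nat.add_le_add List.countP_le_length le_rfl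
      _ ≤ i := by simp
  have := hdom t
  omega

noncomputable def grid (lam : ℝ) (K : ℕ) : Multiset ℝ :=
  (Multiset.range K).map (fun k : ℕ => ((k : ℝ) + 1) / lam)

lemma count_grid (lam : ℝ) (hlam : 0 < lam) (K : ℕ) (t : ℝ) :
    ((grid lam K).filter (· ≤ t)).card = min K (Int.toNat ⌊t * lam⌋) := by
  classical
  unfold grid
  rw [Multiset.filter_map (f := fun k : ℕ => ((k : ℝ) + 1) / lam) (s := Multiset.range K), Multiset.card_map]
  have : Multiset.filter ((· ≤ t) ∘ fun k : ℕ => ((k : ℝ) + 1) / lam) (Multiset.range K)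
      = ((Finset.range K).filter (fun k : ℕ => ((k:ℝ)+1)/lam ≤ t)).val := by
    rw [Finset.filter_val, Finset.range_val]
    rfl
  rw [this, ← Finset.card_def]
  have : (Finset.range K).filter (fun k : ℕ => ((k:ℝ)+1)/lam ≤ t)
      = Finset.range (min K (Int.toNat ⌊t * lam⌋)) := by
    ext k
    simp only [Finset.mem_filter, Finset.mem_range, lt_min_iff]
    have hiff : ((k:ℝ)+1)/lam ≤ t ↔ (k:ℤ) + 1 ≤ ⌊t * lam⌋ := by
      rw [div_le_iff₀ hlam, Int.le_floor]
      push_cast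
      tauto
    rw [hiff]
    omega
  rw [this, Finset.card_range]

lemma floor_superadd (x y : ℝ) : ⌊x⌋ + ⌊y⌋ ≤ ⌊x + y⌋ := by
  apply Int.le_floor.mpr
  push_cast
  exact add_le_add (Int.floor_le x) (Int.floor_le y)

lemma grid_dom (m n Q : ℕ) (hm : 1 ≤ m) (hn : 1 ≤ n) (t : ℝ) :
    ((grid m (m*Q+1) + grid n (n*Q+1)).filter (· ≤ t)).card
      ≤ ((grid ((m:ℝ)+(n:ℝ)) ((m+n)*Q+2)).filter (· ≤ t)).card := by
  classical
  rw [Multiset.filter_add, Multiset.card_add]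
  have hm' : (0:ℝ) < m := by exact_mod_cast hm
  have hn' : (0:ℝ) < n := by exact_mod_cast hn
  rw [count_grid _ hm', count_grid _ hn', count_grid _ (by linarith)]
  have hfl : ⌊t*m⌋ + ⌊t*n⌋ ≤ ⌊t*((m:ℝ)+(n:ℝ))⌋ := by
    have := floor_superadd (t*m) (t*n)
    have he : t*(m:ℝ) + t*(n:ℝ) = t*((m:ℝ)+(n:ℝ)) := by ring
    rwa [he] at this
  have hQ : (m+n)*Q = m*Q + n*Q := by ring
  rcases le_or_gt 0 t with ht | ht
  · have h1 : 0 ≤ ⌊t*m⌋ := Int.floor_nonneg.mpr (by positivity)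
    have h2 : 0 ≤ ⌊t*n⌋ := Int.floor_nonneg.mpr (by positivity)
    omega
  · have h1 : ⌊t*m⌋ < 0 := Int.floor_lt.mpr (by push_cast; nlinarith)
    have h2 : ⌊t*n⌋ < 0 := Int.floor_lt.mpr (by push_cast; nlinarith)
    omega

lemma multiset_pair_convex (A B : Multiset ℝ)
    (hB : ∀ x ∈ B, (0:ℝ) < x)
    (hcard : Multiset.card A = Multiset.card B)
    (hdom : ∀ t : ℝ, (A.filter (· ≤ t)).card ≤ (B.filter (· ≤ t)).card) :
    ConvexOn ℝ (Set.Ici 0)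
      (fun a : ℝ => (A.map (fun x => Real.log (a + x))).sum
        - (B.map (fun x => Real.log (a + x))).sum) := by
  classical
  set l₁ := A.sort (· ≤ ·) with hl₁
  set l₂ := B.sort (· ≤ ·) with hl₂
  have e₁ : (l₁ : Multiset ℝ) = A := Multiset.sort_eq _ _
  have e₂ : (l₂ : Multiset ℝ) = B := Multiset.sort_eq _ _
  have hlen : l₁.length = l₂.length := by
    rw [hl₁, hl₂, Multiset.length_sort, Multiset.length_sort, hcard]
  have hcount : ∀ (l : List ℝ) (t : ℝ),
      l.countP (fun x => decide (x ≤ t)) = ((l : Multiset ℝ).filter (· ≤ t)).card := by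
    intro l t
    rw [← Multiset.countP_eq_card_filter]
    simp [Multiset.coe_countP]
  have hpt : ∀ (i : ℕ) (hi : i < l₁.length), l₂.get ⟨i, hlen ▸ hi⟩ ≤ l₁.get ⟨i, hi⟩ := by
    refine sorted_dom_pointwise l₁ l₂ (Multiset.pairwise_sort _ _) (Multiset.pairwise_sort _ _) hlen ?_
    intro t
    rw [hcount l₁ t, hcount l₂ t, e₁, e₂]
    exact hdom t
  have hpos : ∀ (j : Fin l₂.length), 0 < l₂.get j := by
    intro j
    exact hB _ (by rw [← e₂]; exact Multiset.mem_coe.mpr (by simpa using l₂.get_mem j j.isLt))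
  have hconv : ConvexOn ℝ (Set.Ici (0:ℝ))
      (fun a => ∑ i : Fin l₁.length,
        (Real.log (a + l₁.get i) - Real.log (a + l₂.get (Fin.cast hlen i)))) := by
    refine convexOn_finset_sum Finset.univ _ ?_
    intro i _
    exact pair_convex (hpos (Fin.cast hlen i)) (hpt i i.isLt)
  refine hconv.congr ?_
  intro a _
  simp only
  have hA : (A.map (fun x => Real.log (a + x))).sum = ∑ i : Fin l₁.length, Real.log (a + l₁.get i) := by
    rw [← e₁]
    rw [Multiset.map_coe, Multiset.sum_coe]
    rw [← List.ofFn_getElem_eq_map, List.sum_ofFn]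
    simp [List.get_eq_getElem]
  have hB' : (B.map (fun x => Real.log (a + x))).sum = ∑ i : Fin l₁.length, Real.log (a + l₂.get (Fin.cast hlen i)) := by
    rw [← e₂]
    rw [Multiset.map_coe, Multiset.sum_coe]
    rw [← List.ofFn_getElem_eq_map, List.sum_ofFn]
    rw [← Equiv.sum_comp (finCongr hlen)]
    simp [List.get_eq_getElem, finCongr]
  rw [Finset.sum_sub_distrib, ← hA, ← hB']

lemma log_gammaSeq (x : ℝ) (hx : 0 < x) (N : ℕ) (hN : 1 ≤ N) :
    Real.log (Real.GammaSeq x N)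
      = x * Real.log N + Real.log (Nat.factorial N) - ∑ j ∈ Finset.range (N+1), Real.log (x + j) := by
  have hNpos : (0:ℝ) < N := by exact_mod_cast hN
  have hfac : (0:ℝ) < (Nat.factorial N : ℝ) := by exact_mod_cast N.factorial_pos
  have hprod : ∀ j ∈ Finset.range (N+1), x + (j:ℝ) ≠ 0 := by
    intro j _; positivity
  unfold Real.GammaSeq
  rw [Real.log_div (by positivity) (Finset.prod_ne_zero_iff.mpr hprod),
    Real.log_mul (by positivity) hfac.ne', Real.log_rpow hNpos,
    Real.log_prod hprod]

lemma sum_range_multiset (K : ℕ) (f : ℕ → ℝ) :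
    (Multiset.map f (Multiset.range K)).sum = ∑ j ∈ Finset.range K, f j := by
  rw [← Finset.range_val]; rfl

lemma sum_log_scaled (lam : ℝ) (hlam : 0 < lam) (a : ℝ) (ha : 0 ≤ a) (K : ℕ) :
    ∑ j ∈ Finset.range K, Real.log (a * lam + 1 + j)
      = K * Real.log lam + ((grid lam K).map (fun x => Real.log (a + x))).sum := by
  have hg : ((grid lam K).map (fun x => Real.log (a + x))).sum
      = ∑ j ∈ Finset.range K, Real.log (a + ((j:ℝ)+1)/lam) := by
    unfold grid
    rw [Multiset.map_map, sum_range_multiset]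
    rfl
  rw [hg]
  have hterm : ∀ j ∈ Finset.range K, Real.log (a * lam + 1 + (j:ℝ))
      = Real.log lam + Real.log (a + ((j:ℝ)+1)/lam) := by
    intro j _
    have he : a * lam + 1 + (j:ℝ) = lam * (a + ((j:ℝ)+1)/lam) := by
      field_simp; ring
    rw [he, Real.log_mul hlam.ne' (by positivity)]
  rw [Finset.sum_congr rfl hterm, Finset.sum_add_distrib]
  simp [mul_comm]

lemma convexOn_affine (c b : ℝ) : ConvexOn ℝ (Set.Ici (0:ℝ)) (fun a => c * a + b) := by
  refine ⟨convex_Ici 0, ?_⟩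
  intro x _ y _ s t hs ht hst
  simp only [smul_eq_mul]
  have : s * (c * x + b) + t * (c * y + b) = c * (s * x + t * y) + (s + t) * b := by ring
  rw [this, hst, one_mul]

lemma grid_card (lam : ℝ) (K : ℕ) : Multiset.card (grid lam K) = K := by
  unfold grid; rw [Multiset.card_map, Multiset.card_range]

lemma grid_pos {lam : ℝ} (hlam : 0 < lam) {K : ℕ} : ∀ x ∈ grid lam K, (0:ℝ) < x := by
  intro x hx
  unfold grid at hx
  rw [Multiset.mem_map] at hx
  obtain ⟨k, _, rfl⟩ := hx
  positivity

lemma two_var_pos (m n : ℕ) (hm : 1 ≤ m) (hn : 1 ≤ n) :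
    ConvexOn ℝ (Set.Ici 0) (fun a : ℝ =>
      Real.log (Real.Gamma (a * ((m:ℝ) + (n:ℝ)) + 1)) - Real.log (Real.Gamma (a * (m:ℝ) + 1))
        - Real.log (Real.Gamma (a * (n:ℝ) + 1))) := by
  have hm' : (0:ℝ) < m := by exact_mod_cast hm
  have hn' : (0:ℝ) < n := by exact_mod_cast hn
  set M : ℝ := (m:ℝ) + (n:ℝ) with hM
  have hM' : (0:ℝ) < M := by positivity
  -- the approximating sequence
  set h : ℕ → ℝ → ℝ := fun Q a =>
    Real.log (Real.GammaSeq (a*M+1) ((m+n)*Q+1))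
      - Real.log (Real.GammaSeq (a*(m:ℝ)+1) (m*Q))
      - Real.log (Real.GammaSeq (a*(n:ℝ)+1) (n*Q)) with hh
  -- Step A : convexity of each h Q, Q ≥ 1
  have stepA : ∀ Q : ℕ, 1 ≤ Q → ConvexOn ℝ (Set.Ici 0) (h Q) := by
    intro Q hQ1
    have hmQ : 1 ≤ m*Q := Nat.one_le_iff_ne_zero.mpr (by positivity)
    have hnQ : 1 ≤ n*Q := Nat.one_le_iff_ne_zero.mpr (by positivity)
    have hMQ : 1 ≤ (m+n)*Q+1 := by omega
    set A : Multiset ℝ := grid m (m*Q+1) + grid n (n*Q+1) with hA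
    set B : Multiset ℝ := grid M ((m+n)*Q+2) with hB
    have hconv : ConvexOn ℝ (Set.Ici 0)
        (fun a : ℝ => (A.map (fun x => Real.log (a + x))).sum
          - (B.map (fun x => Real.log (a + x))).sum) := by
      apply multiset_pair_convex
      · exact grid_pos hM'
      · rw [hA, hB, Multiset.card_add, grid_card, grid_card, grid_card]; ring
      · intro t; exact grid_dom m n Q hm hn t
    set c2 : ℝ := M * Real.log ((m+n)*Q+1) - m * Real.log (m*Q) - n * Real.log (n*Q) with hc2
    set c1 : ℝ := Real.log ((m+n)*Q+1) - Real.log (m*Q) - Real.log (n*Q)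
      + Real.log (Nat.factorial ((m+n)*Q+1)) - Real.log (Nat.factorial (m*Q))
      - Real.log (Nat.factorial (n*Q))
      - ((m+n)*Q+2) * Real.log M + (m*Q+1) * Real.log m + (n*Q+1) * Real.log n with hc1
    refine ((convexOn_affine c2 c1).add hconv).congr ?_
    intro a ha
    simp only [mem_Ici] at ha
    simp only [Pi.add_apply, hh]
    rw [log_gammaSeq (a*M+1) (by positivity) _ hMQ,
        log_gammaSeq (a*(m:ℝ)+1) (by positivity) _ hmQ,
        log_gammaSeq (a*(n:ℝ)+1) (by positivity) _ hnQ]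
    rw [show (m+n)*Q+1+1 = (m+n)*Q+2 from by omega]
    rw [sum_log_scaled M hM' a ha, sum_log_scaled (m:ℝ) hm' a ha, sum_log_scaled (n:ℝ) hn' a ha]
    rw [hA, Multiset.map_add, Multiset.sum_add]
    rw [hc1, hc2, hB]
    push_cast
    ring
  -- Step B : pointwise convergence
  have stepB : ∀ a : ℝ, 0 ≤ a → Tendsto (fun Q => h Q a) atTop
      (𝓝 (Real.log (Real.Gamma (a * M + 1)) - Real.log (Real.Gamma (a * (m:ℝ) + 1))
        - Real.log (Real.Gamma (a * (n:ℝ) + 1)))) := by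
    intro a ha
    have key : ∀ (x : ℝ), 0 < x → ∀ (c : ℕ → ℕ), (∀ Q, Q ≤ c Q) →
        Tendsto (fun Q => Real.log (Real.GammaSeq x (c Q))) atTop
          (𝓝 (Real.log (Real.Gamma x))) := by
      intro x hx c hc
      have h1 : Tendsto c atTop atTop := tendsto_atTop_mono hc tendsto_id
      exact ((Real.GammaSeq_tendsto_Gamma x).comp h1).log (Real.Gamma_pos_of_pos hx).ne'
    have t1 := key (a*M+1) (by positivity) (fun Q => (m+n)*Q+1)
      (fun Q => by show Q ≤ (m+n)*Q+1; have : 1*Q ≤ (m+n)*Q := Nat.mul_le_mul_right Q (by omega); omega)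
    have t2 := key (a*(m:ℝ)+1) (by positivity) (fun Q => m*Q)
      (fun Q => by show Q ≤ m*Q; have : 1*Q ≤ m*Q := Nat.mul_le_mul_right Q (by omega); omega)
    have t3 := key (a*(n:ℝ)+1) (by positivity) (fun Q => n*Q)
      (fun Q => by show Q ≤ n*Q; have : 1*Q ≤ n*Q := Nat.mul_le_mul_right Q (by omega); omega)
    exact (t1.sub t2).sub t3
  -- Step C : pass to the limit
  refine ⟨convex_Ici 0, ?_⟩
  intro x hx y hy s t hs ht hst
  have hmem : s • x + t • y ∈ Set.Ici (0:ℝ) := (convex_Ici 0) hx hy hs ht hst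
  have hev : ∀ᶠ Q in atTop, h Q (s • x + t • y) ≤ s * h Q x + t * h Q y := by
    filter_upwards [eventually_ge_atTop 1] with Q hQ1
    have := (stepA Q hQ1).2 hx hy hs ht hst
    simpa using this
  have lhsT := stepB (s • x + t • y) hmem
  have rhsT := ((stepB x hx).const_mul s).add ((stepB y hy).const_mul t)
  have := le_of_tendsto_of_tendsto lhsT rhsT hev
  simpa using this

lemma two_var (m n : ℕ) :
    ConvexOn ℝ (Set.Ici 0) (fun a : ℝ =>
      Real.log (Real.Gamma (a * ((m:ℝ) + (n:ℝ)) + 1)) - Real.log (Real.Gamma (a * (m:ℝ) + 1))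
        - Real.log (Real.Gamma (a * (n:ℝ) + 1))) := by
  rcases Nat.eq_zero_or_pos m with rfl | hm
  · refine (convexOn_const 0 (convex_Ici 0)).congr ?_
    intro a _
    simp [Real.Gamma_one]
  rcases Nat.eq_zero_or_pos n with rfl | hn
  · refine (convexOn_const 0 (convex_Ici 0)).congr ?_
    intro a _
    simp [Real.Gamma_one]
  exact two_var_pos m n hm hn

lemma main_aux {ι : Type*} (s : Finset ι) (ℓ : ι → ℕ) :
    ConvexOn ℝ (Set.Ici 0) (fun a : ℝ =>
      Real.log (Real.Gamma (a * ((∑ i ∈ s, ℓ i : ℕ) : ℝ) + 1))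
        - ∑ i ∈ s, Real.log (Real.Gamma (a * ((ℓ i : ℕ) : ℝ) + 1))) := by
  induction s using Finset.cons_induction with
  | empty =>
    refine (convexOn_const 0 (convex_Ici 0)).congr ?_
    intro a _
    simp [Real.Gamma_one]
  | cons j t hj ih =>
    have := (two_var (∑ i ∈ t, ℓ i) (ℓ j)).add ih
    refine this.congr ?_
    intro a _
    simp only [Pi.add_apply, Finset.sum_cons]
    push_cast
    have hsum : ∑ x ∈ t, Real.log (Real.Gamma (a * ((ℓ x : ℕ) : ℝ) + 1))
        = ∑ x ∈ t, Real.log (Real.Gamma (1 + a * ((ℓ x : ℕ) : ℝ))) :=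
      Finset.sum_congr rfl (fun x _ => by rw [add_comm])
    rw [hsum]
    ring

/-- Eq. (9) of the paper: for nonnegative integers `ℓ₁, …, ℓ_d` with sum `L ≥ 1`, the
map `a ↦ log Γ(aL + 1) − ∑ᵢ log Γ(aℓᵢ + 1)` is convex on `[0, ∞)`. -/
theorem convexOn_log_gamma_ratio
    (d : ℕ) (hd : 1 ≤ d) (ℓ : Fin d → ℕ) (hL : 1 ≤ ∑ i, ℓ i) :
    ConvexOn ℝ (Set.Ici 0)
      (fun a : ℝ =>
        Real.log (Real.Gamma (a * (∑ i, ℓ i : ℕ) + 1))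
          - ∑ i, Real.log (Real.Gamma (a * (ℓ i : ℕ) + 1))) := by
  exact main_aux Finset.univ ℓ
end

section
/- Let d be a positive integer, let μ_d be the product measure on ℝ^d of d copies of the standard Gaussian measure N(0,1), let C = (c_{ij}) be a d×d real matrix with all entries nonnegative, and let n_1, …, n_d be nonnegative integers. Then ∫ ∏_{i=1}^d (∑_{j=1}^d c_{ij} z_j)^{2 n_i} dμ_d(z) ≥ ∑_{ℓ} [∏_{j=1}^d (2 L_j)!/(2^{L_j} L_j!)] · ∏_{i=1}^d [(2 n_i)!/∏_{j=1}^d (2 ℓ_{ij})!] · ∏_{j=1}^d c_{ij}^{2 ℓ_{ij}}, where the sum runs over all d×d arrays (ℓ_{ij}) of nonnegative integers with row sums ℓ_{i1} + ⋯ + ℓ_{id} = n_i for each i, and L_j = ℓ_{1j} + ⋯ + ℓ_{dj}. -/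
/-!
Expand each factor `(∑ⱼ cᵢⱼ zⱼ)^(2nᵢ)` by the multinomial theorem and integrate term by term:
the integral becomes a sum over arrays `K` with row sums `2nᵢ` of nonnegative coefficients times
products of Gaussian moments `∫ x^(∑ᵢ Kᵢⱼ)`. Odd Gaussian moments vanish and even ones are
positive, so every term is nonnegative; keeping only the arrays `K = 2ℓ` and evaluating
`∫ x^(2L) = (2L)!/(2^L L!)` gives the bound.
-/

open MeasureTheory ProbabilityTheory Finset Real
open scoped Nat NNReal

lemma Nat.factorial_two_mul_eq_doubleFactorial_mul (m : ℕ) :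
    (2 * m)! = (2 * m - 1)‼ * (2 ^ m * m !) := by
  rcases m with _ | k
  · rfl
  · rw [show 2 * (k + 1) = 2 * k + 1 + 1 by ring, Nat.factorial_eq_mul_doubleFactorial,
      show 2 * k + 1 + 1 = 2 * (k + 1) by ring, Nat.doubleFactorial_two_mul,
      show 2 * (k + 1) - 1 = 2 * k + 1 by omega, mul_comm]

lemma Nat.cast_multinomial_eq_div {α K : Type*} [Field K] [CharZero K] (s : Finset α)
    (f : α → ℕ) : (Nat.multinomial s f : K) = (∑ i ∈ s, f i)! / ∏ i ∈ s, ((f i)! : K) := by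
  have hne : ∏ i ∈ s, ((f i)! : K) ≠ 0 := prod_ne_zero_iff.mpr fun i _ =>
    Nat.cast_ne_zero.mpr (Nat.factorial_ne_zero _)
  rw [eq_div_iff hne, mul_comm, ← Nat.multinomial_spec]
  push_cast
  ring

lemma integrable_pow_gaussianReal (μ : ℝ) (v : ℝ≥0) (k : ℕ) :
    Integrable (fun x : ℝ => x ^ k) (gaussianReal μ v) :=
  (integrable_norm_iff (by fun_prop)).mp <| by
    simpa [norm_pow] using (memLp_id_gaussianReal k).integrable_norm_pow'

lemma integral_pow_eq_zero_of_odd {μ : Measure ℝ} (hμ : μ.map (fun x => -x) = μ) {k : ℕ}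
    (hk : Odd k) : ∫ x, x ^ k ∂μ = 0 := by
  have h : ∫ x, x ^ k ∂μ = -∫ x, x ^ k ∂μ := by
    conv_lhs => rw [← hμ]
    rw [integral_map (by fun_prop) (by fun_prop), ← integral_neg]
    simp_rw [hk.neg_pow]
  linarith

lemma integral_pow_nonneg_of_map_neg_eq {μ : Measure ℝ} (hμ : μ.map (fun x => -x) = μ)
    (k : ℕ) : 0 ≤ ∫ x, x ^ k ∂μ := by
  rcases k.even_or_odd with hk | hk
  · exact integral_nonneg fun x => hk.pow_nonneg x
  · exact (integral_pow_eq_zero_of_odd hμ hk).ge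

lemma integral_pow_two_mul_mul_exp_neg_mul_sq {b : ℝ} (hb : 0 < b) (m : ℕ) :
    ∫ x : ℝ, x ^ (2 * m) * exp (-b * x ^ 2) = Gamma (m + 1 / 2) / b ^ ((m : ℝ) + 1 / 2) := by
  have hm : ((2 * m : ℕ) + 1 : ℝ) / 2 = m + 1 / 2 := by push_cast; ring
  calc ∫ x : ℝ, x ^ (2 * m) * exp (-b * x ^ 2)
      = 2 * ∫ x in Set.Ioi (0 : ℝ), x ^ (2 * m) * exp (-b * x ^ 2) := by
        rw [← integral_comp_abs (f := fun x => x ^ (2 * m) * exp (-b * x ^ 2))]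
        simp_rw [pow_mul, sq_abs]
    _ = 2 * ∫ x in Set.Ioi (0 : ℝ), x ^ ((2 * m : ℕ) : ℝ) * exp (-b * x ^ (2 : ℝ)) := by
        simp_rw [rpow_natCast, rpow_two]
    _ = _ := by
        rw [integral_rpow_mul_exp_neg_mul_rpow two_pos
          (neg_one_lt_zero.trans_le (Nat.cast_nonneg _)) hb, hm, neg_div, hm, rpow_neg hb.le]
        ring

lemma integral_pow_two_mul_gaussianReal (m : ℕ) :
    ∫ x, x ^ (2 * m) ∂gaussianReal 0 1 = ((2 * m)! : ℝ) / (2 ^ m * m !) := by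
  have hexp : ∀ x : ℝ, -(x - 0) ^ 2 / (2 * ((1 : ℝ≥0) : ℝ)) = -(1 / 2) * x ^ 2 := fun x => by
    push_cast; ring
  simp_rw [integral_gaussianReal_eq_integral_smul one_ne_zero, gaussianPDFReal, hexp,
    smul_eq_mul, mul_assoc, integral_const_mul, mul_comm (exp _),
    integral_pow_two_mul_mul_exp_neg_mul_sq one_half_pos, Gamma_nat_add_half,
    Nat.factorial_two_mul_eq_doubleFactorial_mul]
  rw [div_rpow zero_le_one zero_le_two, one_rpow, rpow_add two_pos, rpow_natCast,
    ← sqrt_eq_rpow]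
  push_cast
  field_simp
  rw [mul_comm, ← sqrt_mul zero_le_two]

section Expansion

variable {ι κ : Type*} [Fintype ι] [Fintype κ]

def expansionCoeff {R : Type*} [CommSemiring R] (c : Matrix ι κ R) (K : ι → κ → ℕ) : R :=
  ∏ i, (Nat.multinomial univ (K i) * ∏ j, c i j ^ K i j)

lemma expansionCoeff_nonneg {R : Type*} [CommSemiring R] [PartialOrder R] [IsOrderedRing R]
    {c : Matrix ι κ R} (hc : ∀ i j, 0 ≤ c i j) (K : ι → κ → ℕ) : 0 ≤ expansionCoeff c K :=
  prod_nonneg fun i _ =>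
    mul_nonneg (Nat.cast_nonneg _) (prod_nonneg fun j _ => pow_nonneg (hc i j) _)

variable [DecidableEq ι] [DecidableEq κ]

lemma prod_sum_mul_pow_eq_sum {R : Type*} [CommSemiring R] (c : Matrix ι κ R) (z : κ → R)
    (N : ι → ℕ) :
    ∏ i, (∑ j, c i j * z j) ^ N i =
      ∑ K ∈ Fintype.piFinset fun i => piAntidiag univ (N i),
        expansionCoeff c K * ∏ j, z j ^ ∑ i, K i j := by
  simp_rw [sum_pow_eq_sum_piAntidiag, prod_univ_sum]
  refine sum_congr rfl fun K _ => ?_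
  simp_rw [expansionCoeff, mul_pow, prod_mul_distrib, mul_assoc]
  rw [prod_comm (f := fun i j => z j ^ K i j)]
  simp_rw [prod_pow_eq_pow_sum]

lemma integral_prod_sum_mul_pow_pi {μ : Measure ℝ} [SigmaFinite μ]
    (hμ : ∀ k : ℕ, Integrable (fun x => x ^ k) μ) (c : Matrix ι κ ℝ) (N : ι → ℕ) :
    ∫ z, ∏ i, (∑ j, c i j * z j) ^ N i ∂Measure.pi (fun _ : κ => μ) =
      ∑ K ∈ Fintype.piFinset fun i => piAntidiag univ (N i),
        expansionCoeff c K * ∏ j, ∫ x, x ^ (∑ i, K i j) ∂μ := by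
  simp_rw [prod_sum_mul_pow_eq_sum]
  rw [integral_finsetSum _ fun K _ => (Integrable.fintype_prod fun j => hμ _).const_mul _]
  refine sum_congr rfl fun K _ => ?_
  rw [integral_const_mul, integral_fintype_prod_eq_prod fun j (x : ℝ) => x ^ ∑ i, K i j]

lemma sum_two_nsmul_le_sum {M : Type*} [AddCommMonoid M] [PartialOrder M]
    [IsOrderedAddMonoid M] {f : (ι → κ → ℕ) → M} (hf : ∀ K, 0 ≤ f K) (N : ι → ℕ) :
    ∑ ℓ ∈ Fintype.piFinset fun i => piAntidiag univ (N i), f (2 • ℓ) ≤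
      ∑ K ∈ Fintype.piFinset fun i => piAntidiag univ (2 * N i), f K := by
  rw [← sum_image fun ℓ _ ℓ' _ h => nsmul_right_injective two_ne_zero h]
  refine sum_le_sum_of_subset_of_nonneg ?_ fun K _ _ => hf K
  intro K hK
  obtain ⟨ℓ, hℓ, rfl⟩ := mem_image.mp hK
  simp only [Fintype.mem_piFinset, mem_piAntidiag] at hℓ ⊢
  exact fun i => ⟨by simp [← mul_sum, (hℓ i).1], by simp⟩

end Expansion

theorem gaussian_product_lower_bound_general
    (d : ℕ) (C : Matrix (Fin d) (Fin d) ℝ)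
    (hC : ∀ i j, 0 ≤ C i j) (n : Fin d → ℕ) :
    (∫ z : Fin d → ℝ, ∏ i, (∑ j, C i j * z j) ^ (2 * n i)
        ∂(Measure.pi fun _ : Fin d => gaussianReal 0 1))
      ≥ ∑ ℓ ∈ Fintype.piFinset (fun i : Fin d => Finset.Nat.antidiagonalTuple d (n i)),
          (∏ j, (((2 * ∑ i, ℓ i j).factorial : ℝ) /
              (2 ^ (∑ i, ℓ i j) * ((∑ i, ℓ i j).factorial : ℝ)))) *
            ∏ i, ((((2 * n i).factorial : ℝ) / ∏ j, ((2 * ℓ i j).factorial : ℝ)) *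
              ∏ j, (C i j) ^ (2 * ℓ i j)) := by
  have hsymm : (gaussianReal 0 1).map (fun x => -x) = gaussianReal 0 1 := by
    simpa using gaussianReal_map_neg (μ := 0) (v := 1)
  have hterm : ∀ K, 0 ≤ expansionCoeff C K * ∏ j, ∫ x, x ^ (∑ i, K i j) ∂gaussianReal 0 1 :=
    fun K => mul_nonneg (expansionCoeff_nonneg hC K)
      (prod_nonneg fun j _ => integral_pow_nonneg_of_map_neg_eq hsymm _)
  rw [ge_iff_le, integral_prod_sum_mul_pow_pi (integrable_pow_gaussianReal 0 1)]
  refine le_of_eq_of_le ?_ (sum_two_nsmul_le_sum hterm n)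
  simp_rw [← piAntidiag_univ_fin_eq_antidiagonalTuple]
  refine sum_congr rfl fun ℓ hℓ => ?_
  have hrow : ∀ i, ∑ j, ℓ i j = n i :=
    fun i => (mem_piAntidiag.mp (Fintype.mem_piFinset.mp hℓ i)).1
  simp only [expansionCoeff, Pi.smul_apply, smul_eq_mul, ← mul_sum,
    integral_pow_two_mul_gaussianReal, Nat.cast_multinomial_eq_div, hrow, prod_mul_distrib]
  ring

/-- The lower bound (5) in the proof of Proposition 2: for a matrix `C` with
nonnegative entries, the integral `∫ ∏ᵢ (∑ⱼ cᵢⱼ zⱼ)^(2nᵢ) dμ_d(z)` is bounded below by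
the sum, over all `d × d` arrays `ℓ` of nonnegative integers with row sums
`∑ⱼ ℓᵢⱼ = nᵢ`, of
`[∏ⱼ (2Lⱼ)!/(2^{Lⱼ} Lⱼ!)] ⬝ ∏ᵢ [(2nᵢ)!/∏ⱼ(2ℓᵢⱼ)!] ⬝ ∏ⱼ cᵢⱼ^(2ℓᵢⱼ)`,
where `Lⱼ = ∑ᵢ ℓᵢⱼ`. -/
theorem gaussian_product_lower_bound
    (d : ℕ) (hd : 0 < d) (C : Matrix (Fin d) (Fin d) ℝ)
    (hC : ∀ i j, 0 ≤ C i j) (n : Fin d → ℕ) :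
    (∫ z : Fin d → ℝ, ∏ i, (∑ j, C i j * z j) ^ (2 * n i)
        ∂(Measure.pi fun _ : Fin d => gaussianReal 0 1))
      ≥ ∑ ℓ ∈ Fintype.piFinset (fun i : Fin d => Finset.Nat.antidiagonalTuple d (n i)),
          (∏ j, (((2 * ∑ i, ℓ i j).factorial : ℝ) /
              (2 ^ (∑ i, ℓ i j) * ((∑ i, ℓ i j).factorial : ℝ)))) *
            ∏ i, ((((2 * n i).factorial : ℝ) / ∏ j, ((2 * ℓ i j).factorial : ℝ)) *
              ∏ j, (C i j) ^ (2 * ℓ i j)) :=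
  gaussian_product_lower_bound_general d C hC n
end

section
/- Let M be the 3×3 real matrix with rows (1, 1/2, 1/2), (1/2, 1, 1/4), (1/2, 1/4, 1), and let Σ = M Mᵀ = M², so that Σ has rows (3/2, 9/8, 9/8), (9/8, 21/16, 3/4), (9/8, 3/4, 21/16). Then: (a) Σ is symmetric positive definite; (b) Σ = M Mᵀ with all entries of M nonnegative, so Σ is completely positive; and (c) the cyclic product (Σ⁻¹)₁₂ · (Σ⁻¹)₂₃ · (Σ⁻¹)₃₁ is strictly positive, so that for every 3×3 signature matrix D the matrix D Σ⁻¹ D has a strictly positive off-diagonal entry. -/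
open Matrix

/-- The explicit example from Section 2 of the paper showing that Condition (III) is
strictly weaker than Condition (II): with `M = !![1, 1/2, 1/2; 1/2, 1, 1/4; 1/2, 1/4, 1]`
and `Σ = M * Mᵀ = !![3/2, 9/8, 9/8; 9/8, 21/16, 3/4; 9/8, 3/4, 21/16]`, the matrix `Σ`
is (a) symmetric positive definite, (b) completely positive, and (c) the cyclic product
`(Σ⁻¹)₁₂ ⬝ (Σ⁻¹)₂₃ ⬝ (Σ⁻¹)₃₁` is strictly positive, so that `D * Σ⁻¹ * D` has a
strictly positive off-diagonal entry for every signature matrix `D`. -/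
theorem condIII_not_condII_example :
    let M : Matrix (Fin 3) (Fin 3) ℝ :=
      !![1, 1/2, 1/2; 1/2, 1, 1/4; 1/2, 1/4, 1]
    let S : Matrix (Fin 3) (Fin 3) ℝ :=
      !![3/2, 9/8, 9/8; 9/8, 21/16, 3/4; 9/8, 3/4, 21/16]
    S.PosDef ∧
    (S = M * Mᵀ ∧ ∀ i j : Fin 3, 0 ≤ M i j) ∧
    (0 < S⁻¹ 0 1 * S⁻¹ 1 2 * S⁻¹ 2 0 ∧
      ∀ D : Matrix (Fin 3) (Fin 3) ℝ,
        (∀ i j : Fin 3, i ≠ j → D i j = 0) →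
        (∀ i : Fin 3, D i i = 1 ∨ D i i = -1) →
        ∃ i j : Fin 3, i ≠ j ∧ 0 < (D * S⁻¹ * D) i j) := by
  intro M S
  have hinv : S⁻¹ = !![11/3, -2, -2; -2, 20/9, 4/9; -2, 4/9, 20/9] := by
    apply Matrix.inv_eq_right_inv
    show S * _ = 1
    ext i j
    fin_cases i <;> fin_cases j <;>
      norm_num [S, Matrix.mul_apply, Fin.sum_univ_three, Matrix.vecHead, Matrix.vecTail,
        Matrix.one_apply, Fin.ext_iff, Matrix.cons_val_two]
  refine ⟨?_, ⟨?_, ?_⟩, ?_, ?_⟩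
  · rw [Matrix.posDef_iff_dotProduct_mulVec]; constructor
    · show Sᴴ = S
      ext i j
      fin_cases i <;> fin_cases j <;>
        simp [S, Matrix.conjTranspose_apply, Matrix.vecHead, Matrix.vecTail]
    · intro x hx
      have h : x 0 ≠ 0 ∨ x 1 ≠ 0 ∨ x 2 ≠ 0 := by
        by_contra h
        push_neg at h
        apply hx
        ext i
        fin_cases i <;> simp [h.1, h.2.1, h.2.2]
      have key : star x ⬝ᵥ S *ᵥ x =
          (x 0 + x 1 / 2 + x 2 / 2) ^ 2 + (x 0 / 2 + x 1 + x 2 / 4) ^ 2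
            + (x 0 / 2 + x 1 / 4 + x 2) ^ 2 := by
        simp only [S, dotProduct, Matrix.mulVec, Fin.sum_univ_three, Pi.star_apply,
          star_trivial, Matrix.of_apply, Matrix.cons_val', Matrix.cons_val_zero, Matrix.cons_val_one,
          Matrix.empty_val', Matrix.cons_val_fin_one, Matrix.vecHead, Matrix.vecTail,
          Function.comp, Matrix.cons_val_two, Matrix.tail_cons, Matrix.cons_val_succ]
        ring
      rw [key]
      rcases h with h | h | h
      · nlinarith [sq_nonneg (x 0 + x 1 / 2 + x 2 / 2), sq_nonneg (x 0 / 2 + x 1 + x 2 / 4),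
          sq_nonneg (x 0 / 2 + x 1 / 4 + x 2), sq_nonneg (x 1 - x 2), sq_nonneg (x 1 + x 2),
          mul_pos (abs_pos.mpr h) (abs_pos.mpr h), sq_abs (x 0)]
      · nlinarith [sq_nonneg (x 0 + x 1 / 2 + x 2 / 2), sq_nonneg (x 0 / 2 + x 1 + x 2 / 4),
          sq_nonneg (x 0 / 2 + x 1 / 4 + x 2), sq_nonneg (x 0 - x 2), sq_nonneg (x 0 + x 2),
          mul_pos (abs_pos.mpr h) (abs_pos.mpr h), sq_abs (x 1)]
      · nlinarith [sq_nonneg (x 0 + x 1 / 2 + x 2 / 2), sq_nonneg (x 0 / 2 + x 1 + x 2 / 4),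
          sq_nonneg (x 0 / 2 + x 1 / 4 + x 2), sq_nonneg (x 0 - x 1), sq_nonneg (x 0 + x 1),
          mul_pos (abs_pos.mpr h) (abs_pos.mpr h), sq_abs (x 2)]
  · ext i j
    fin_cases i <;> fin_cases j <;>
      norm_num [S, M, Matrix.mul_apply, Fin.sum_univ_three, Matrix.vecHead, Matrix.vecTail,
        Matrix.transpose_apply, Matrix.cons_val_two]
  · intro i j
    fin_cases i <;> fin_cases j <;> norm_num [M, Matrix.vecHead, Matrix.vecTail]
  · rw [hinv]; norm_num [Matrix.vecHead, Matrix.vecTail, Matrix.cons_val_two]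
  · intro D hoff hdiag
    have e01 : (D * S⁻¹ * D) 0 1 = D 0 0 * S⁻¹ 0 1 * D 1 1 := by
      simp [Matrix.mul_apply, Fin.sum_univ_three, hoff 0 1 (by decide), hoff 0 2 (by decide),
        hoff 1 0 (by decide), hoff 2 1 (by decide), hoff 1 2 (by decide), hoff 2 0 (by decide)]
    have e12 : (D * S⁻¹ * D) 1 2 = D 1 1 * S⁻¹ 1 2 * D 2 2 := by
      simp [Matrix.mul_apply, Fin.sum_univ_three, hoff 0 1 (by decide), hoff 0 2 (by decide),
        hoff 1 0 (by decide), hoff 2 1 (by decide), hoff 1 2 (by decide), hoff 2 0 (by decide)]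
    have e20 : (D * S⁻¹ * D) 2 0 = D 2 2 * S⁻¹ 2 0 * D 0 0 := by
      simp [Matrix.mul_apply, Fin.sum_univ_three, hoff 0 1 (by decide), hoff 0 2 (by decide),
        hoff 1 0 (by decide), hoff 2 1 (by decide), hoff 1 2 (by decide), hoff 2 0 (by decide)]
    have v01 : S⁻¹ 0 1 = -2 := by rw [hinv]; norm_num [Matrix.vecHead, Matrix.vecTail]
    have v12 : S⁻¹ 1 2 = 4/9 := by rw [hinv]; norm_num [Matrix.vecHead, Matrix.vecTail, Matrix.cons_val_two]
    have v20 : S⁻¹ 2 0 = -2 := by rw [hinv]; norm_num [Matrix.vecHead, Matrix.vecTail, Matrix.cons_val_two]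
    rcases hdiag 0 with h0 | h0 <;> rcases hdiag 1 with h1 | h1 <;> rcases hdiag 2 with h2 | h2
    · exact ⟨1, 2, by decide, by rw [e12, v12, h1, h2]; norm_num⟩
    · exact ⟨2, 0, by decide, by rw [e20, v20, h0, h2]; norm_num⟩
    · exact ⟨0, 1, by decide, by rw [e01, v01, h0, h1]; norm_num⟩
    · exact ⟨0, 1, by decide, by rw [e01, v01, h0, h1]; norm_num⟩
    · exact ⟨0, 1, by decide, by rw [e01, v01, h0, h1]; norm_num⟩
    · exact ⟨0, 1, by decide, by rw [e01, v01, h0, h1]; norm_num⟩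
    · exact ⟨2, 0, by decide, by rw [e20, v20, h0, h2]; norm_num⟩
    · exact ⟨1, 2, by decide, by rw [e12, v12, h1, h2]; norm_num⟩
end

section
/- Let d ≥ 1, let ℓ_1, …, ℓ_d be positive integers with sum L = ℓ_1 + ⋯ + ℓ_d, and let a ≥ 0 be a real number. Then L² · ψ′(a L + 1) ≥ ∑_{i=1}^d ℓ_i² · ψ′(a ℓ_i + 1), where ψ′(z) = ∫_0^∞ t e^{−(z−1)t}/(e^t − 1) dt denotes the trigamma function, expressed for z > 0 by this integral representation. -/
open MeasureTheory

/-- The trigamma function, expressed for `z > 0` by its integral representation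
`ψ′(z) = ∫₀^∞ t e^{−(z−1)t} / (eᵗ − 1) dt`. -/
noncomputable def trigamma (z : ℝ) : ℝ :=
  ∫ t in Set.Ioi (0 : ℝ), t * Real.exp (-(z - 1) * t) / (Real.exp t - 1)

namespace TrigammaAux

open Real Set

/-- The rescaled integrand. -/
noncomputable def f (a c s : ℝ) : ℝ := s * Real.exp (-a * s) / (Real.exp (s / c) - 1)

lemma f_nonneg {a c : ℝ} (hc : 0 < c) {s : ℝ} (hs : 0 < s) : 0 ≤ f a c s := by
  have h1 : (1 : ℝ) < Real.exp (s / c) := by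
    rw [Real.one_lt_exp_iff]; positivity
  unfold f
  apply div_nonneg
  · positivity
  · linarith

/-- Key decay bound: `s / (exp (s/c) - 1) ≤ c * exp (-(s/(2c)))` for `s > 0`. -/
lemma key_bound {c : ℝ} (hc : 0 < c) {s : ℝ} (hs : 0 < s) :
    s / (Real.exp (s / c) - 1) ≤ c * Real.exp (-(1 / (2 * c)) * s) := by
  set u : ℝ := s / c with hu
  have hu0 : 0 < u := by positivity
  have hsinh : u / 2 < Real.sinh (u / 2) := Real.self_lt_sinh_iff.mpr (by positivity)
  have hsinh_eq : Real.sinh (u / 2) = (Real.exp (u / 2) - Real.exp (-(u / 2))) / 2 :=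
    Real.sinh_eq _
  have hkey : u ≤ Real.exp (-(u / 2)) * (Real.exp u - 1) := by
    have : Real.exp (-(u / 2)) * (Real.exp u - 1)
        = Real.exp (u / 2) - Real.exp (-(u / 2)) := by
      rw [mul_sub, ← Real.exp_add, mul_one]; ring_nf
    rw [this]
    nlinarith [hsinh, hsinh_eq]
  have hden : 0 < Real.exp u - 1 := by
    rw [sub_pos, Real.one_lt_exp_iff]; exact hu0
  have h1 : u / (Real.exp u - 1) ≤ Real.exp (-(u / 2)) := by
    rw [div_le_iff₀ hden]; linarith [hkey]
  have hs_eq : s = c * u := by rw [hu]; field_simp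
  have hexp : -(u / 2) = -(1 / (2 * c)) * s := by
    rw [hs_eq]; field_simp
  calc s / (Real.exp (s / c) - 1) = c * (u / (Real.exp u - 1)) := by
        rw [hs_eq, mul_div_cancel_left₀ _ hc.ne', mul_div_assoc]
    _ ≤ c * Real.exp (-(u / 2)) := by
        exact mul_le_mul_of_nonneg_left h1 hc.le
    _ = c * Real.exp (-(1 / (2 * c)) * s) := by rw [hexp]

lemma f_integrable {a c : ℝ} (ha : 0 ≤ a) (hc : 0 < c) :
    IntegrableOn (f a c) (Ioi (0 : ℝ)) := by
  have hmeas : AEStronglyMeasurable (f a c) (volume.restrict (Ioi (0:ℝ))) := by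
    apply Measurable.aestronglyMeasurable
    unfold f
    fun_prop
  have hint : IntegrableOn (fun s => c * Real.exp (-(1 / (2 * c)) * s)) (Ioi (0:ℝ)) := by
    have := (exp_neg_integrableOn_Ioi (0 : ℝ) (b := 1 / (2 * c)) (by positivity))
    exact this.const_mul c
  refine hint.integrable.mono hmeas ?_
  filter_upwards [ae_restrict_mem measurableSet_Ioi] with s hs
  have hs0 : (0:ℝ) < s := hs
  have h1 : (0:ℝ) ≤ f a c s := f_nonneg hc hs0
  have h2 : f a c s ≤ c * Real.exp (-(1 / (2 * c)) * s) := by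
    have hb := key_bound hc hs0
    have hden : 0 < Real.exp (s / c) - 1 := by
      rw [sub_pos, Real.one_lt_exp_iff]; positivity
    have hexp1 : Real.exp (-a * s) ≤ 1 := by
      rw [Real.exp_le_one_iff]; nlinarith
    calc f a c s = s * Real.exp (-a * s) / (Real.exp (s / c) - 1) := rfl
      _ ≤ s * 1 / (Real.exp (s / c) - 1) := by
          gcongr
      _ = s / (Real.exp (s / c) - 1) := by rw [mul_one]
      _ ≤ c * Real.exp (-(1 / (2 * c)) * s) := hb
  rw [Real.norm_eq_abs, Real.norm_eq_abs, abs_of_nonneg h1, abs_of_nonneg (by positivity)]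
  exact h2

/-- Change of variables: `c² ψ′(ac+1) = ∫₀^∞ f a c`. -/
lemma sq_mul_trigamma_eq {a c : ℝ} (hc : 0 < c) :
    c ^ 2 * trigamma (a * c + 1) = ∫ s in Ioi (0:ℝ), f a c s := by
  have h := integral_comp_mul_left_Ioi (f a c) 0 hc
  rw [mul_zero] at h
  have heq : ∀ t ∈ Ioi (0:ℝ), f a c (c * t)
      = c * (t * Real.exp (-(a * c + 1 - 1) * t) / (Real.exp t - 1)) := by
    intro t ht
    unfold f
    rw [mul_div_cancel_left₀ _ hc.ne']
    have : -a * (c * t) = -(a * c + 1 - 1) * t := by ring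
    rw [this]; ring
  rw [setIntegral_congr_fun measurableSet_Ioi heq] at h
  rw [integral_const_mul] at h
  rw [smul_eq_mul] at h
  have : trigamma (a * c + 1)
      = ∫ t in Ioi (0:ℝ), t * Real.exp (-(a * c + 1 - 1) * t) / (Real.exp t - 1) := rfl
  rw [this]
  field_simp at h ⊢
  rw [← h]; congr 1; congr 1; funext t; ring_nf

/-- Pointwise comparison: for `0 < c ≤ L` and `s > 0`, `f a c s ≤ (c / L) * f a L s`. -/
lemma f_le {a c L : ℝ} (hc : 0 < c) (hcL : c ≤ L) {s : ℝ} (hs : 0 < s) :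
    f a c s ≤ (c / L) * f a L s := by
  have hL : 0 < L := lt_of_lt_of_le hc hcL
  set x : ℝ := Real.exp (s / L) with hx
  have hx1 : (1:ℝ) < x := by rw [hx, Real.one_lt_exp_iff]; positivity
  set p : ℝ := L / c with hp
  have hp1 : (1:ℝ) ≤ p := (one_le_div hc).mpr hcL
  -- Bernoulli: 1 + p*(x-1) ≤ x^p
  have hbern : 1 + p * (x - 1) ≤ x ^ p := by
    have := one_add_mul_self_le_rpow_one_add (s := x - 1) (by linarith) hp1
    simpa using this
  have hxp : Real.exp (s / c) = x ^ p := by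
    have hsc : s / c = (s / L) * p := by
      rw [hp]; field_simp
    rw [hsc, Real.exp_mul, hx]
  have hdenL : 0 < x - 1 := by linarith
  have hdenc : 0 < Real.exp (s / c) - 1 := by
    rw [sub_pos, Real.one_lt_exp_iff]; positivity
  have hdom : p * (x - 1) ≤ Real.exp (s / c) - 1 := by
    rw [hxp]; linarith [hbern]
  have hN : 0 ≤ s * Real.exp (-a * s) := by positivity
  have h1 : f a c s ≤ s * Real.exp (-a * s) / (p * (x - 1)) := by
    unfold f
    exact div_le_div_of_nonneg_left hN (by positivity) hdom
  have h2 : s * Real.exp (-a * s) / (p * (x - 1)) = (c / L) * f a L s := by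
    unfold f
    rw [← hx, hp]
    field_simp
  linarith [h1, h2.le]

end TrigammaAux

/-- The pointwise second-derivative bound (Eqs. (8)–(9)) in the proof of Proposition 2:
for positive integers `ℓ₁, …, ℓ_d` with sum `L` and any real `a ≥ 0`,
`L² ψ′(aL + 1) ≥ ∑ᵢ ℓᵢ² ψ′(aℓᵢ + 1)`. -/
theorem trigamma_second_derivative_bound
    (d : ℕ) (hd : 1 ≤ d) (ℓ : Fin d → ℕ) (hℓ : ∀ i, 0 < ℓ i)
    (a : ℝ) (ha : 0 ≤ a) :
    ((∑ i, ℓ i : ℕ) : ℝ) ^ 2 * trigamma (a * (∑ i, ℓ i : ℕ) + 1)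
      ≥ ∑ i, ((ℓ i : ℕ) : ℝ) ^ 2 * trigamma (a * (ℓ i : ℕ) + 1) := by
  classical
  open TrigammaAux Set in
  set L : ℕ := ∑ i, ℓ i with hL
  have hLpos : 0 < L := by
    have : 0 < ℓ ⟨0, hd⟩ := hℓ _
    exact Finset.sum_pos (fun i _ => hℓ i) ⟨⟨0, hd⟩, Finset.mem_univ _⟩
  have hLr : (0:ℝ) < (L:ℝ) := by exact_mod_cast hLpos
  have hle : ∀ i, (ℓ i : ℝ) ≤ (L:ℝ) := by
    intro i
    exact_mod_cast Finset.single_le_sum (f := fun i => ℓ i) (fun i _ => Nat.zero_le _)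
      (Finset.mem_univ i)
  have hci : ∀ i, (0:ℝ) < (ℓ i : ℝ) := fun i => by exact_mod_cast hℓ i
  -- rewrite everything as integrals of f
  have hrw : ∀ i, ((ℓ i : ℕ) : ℝ) ^ 2 * trigamma (a * (ℓ i : ℕ) + 1)
      = ∫ s in Ioi (0:ℝ), f a (ℓ i : ℝ) s := fun i => sq_mul_trigamma_eq (hci i)
  have hrwL : ((L : ℕ) : ℝ) ^ 2 * trigamma (a * (L : ℕ) + 1)
      = ∫ s in Ioi (0:ℝ), f a (L : ℝ) s := sq_mul_trigamma_eq hLr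
  rw [ge_iff_le, hrwL]
  calc ∑ i, ((ℓ i : ℕ) : ℝ) ^ 2 * trigamma (a * (ℓ i : ℕ) + 1)
      = ∑ i, ∫ s in Ioi (0:ℝ), f a (ℓ i : ℝ) s := by
        exact Finset.sum_congr rfl (fun i _ => hrw i)
    _ = ∫ s in Ioi (0:ℝ), ∑ i, f a (ℓ i : ℝ) s := by
        rw [integral_finset_sum _ (fun i _ => f_integrable ha (hci i))]
    _ ≤ ∫ s in Ioi (0:ℝ), f a (L : ℝ) s := by
        apply setIntegral_mono_on
        · exact integrable_finset_sum _ (fun i _ => f_integrable ha (hci i))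
        · exact f_integrable ha hLr
        · exact measurableSet_Ioi
        · intro s hs
          have hs0 : (0:ℝ) < s := hs
          calc ∑ i, f a (ℓ i : ℝ) s ≤ ∑ i, ((ℓ i : ℝ) / (L:ℝ)) * f a (L:ℝ) s :=
                Finset.sum_le_sum (fun i _ => f_le (hci i) (hle i) hs0)
            _ = f a (L:ℝ) s := by
                rw [← Finset.sum_mul, ← Finset.sum_div]
                have : (∑ i, (ℓ i : ℝ)) = (L:ℝ) := by
                  rw [hL]; push_cast; rfl
                rw [this, div_self hLr.ne', one_mul]
end
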